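/- arXiv:2310.08935 — 7 statements merged into one kernel-verified Lean document; each statement's English description precedes it below -/
import Mathlib

section
/- For every integer J ≥ 2, the function f(z) = J(1−z)z^J/(1−z^J) is strictly convex on the open interval (0,1). -/
/-!
Differentiating twice gives `f''(x) = J² x^(J-2) Q(x) / (1 - x^J)³` with
`Q(x) = (J-1) - (J+1)x + (J+1)x^J - (J-1)x^(J+1)`, and `Q` factors as
`Q(x) = (1 - x) ∑_{k=0}^{J} (1 - x^k)(1 - x^(J-k))`: on `[0, 1)` every summand is nonnegative
and the one with `k = 1` is positive.
-/

open Finset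

lemma strictConvexOn_of_hasDerivAt2_pos {D : Set ℝ} (hD : Convex ℝ D) (hD' : IsOpen D)
    {f f' f'' : ℝ → ℝ} (hf : ∀ x ∈ D, HasDerivAt f (f' x) x)
    (hf' : ∀ x ∈ D, HasDerivAt f' (f'' x) x) (hf'' : ∀ x ∈ D, 0 < f'' x) :
    StrictConvexOn ℝ D f := by
  refine strictConvexOn_of_deriv2_pos' hD
    (fun x hx => (hf x hx).continuousAt.continuousWithinAt) fun x hx => ?_
  have hderiv : deriv f =ᶠ[nhds x] f' :=
    Filter.eventuallyEq_of_mem (hD'.mem_nhds hx) fun y hy => (hf y hy).deriv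
  rw [Function.iterate_succ_apply, Function.iterate_one, hderiv.deriv_eq, (hf' x hx).deriv]
  exact hf'' x hx

theorem sum_range_one_sub_pow_mul_one_sub_pow_mul_one_sub {R : Type*} [CommRing R]
    (x : R) (J : ℕ) :
    (∑ k ∈ range (J + 1), (1 - x ^ k) * (1 - x ^ (J - k))) * (1 - x) =
      (J - 1) - (J + 1) * x + (J + 1) * x ^ J - (J - 1) * x ^ (J + 1) := by
  have hterm : ∀ k ∈ range (J + 1),
      (1 - x ^ k) * (1 - x ^ (J - k)) = (1 + x ^ J) - x ^ k - x ^ (J - k) := by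
    intro k hk
    have : x ^ k * x ^ (J - k) = x ^ J := by
      rw [← pow_add, Nat.add_sub_cancel' (mem_range_succ_iff.mp hk)]
    linear_combination this
  have hreflect : ∑ k ∈ range (J + 1), x ^ (J - k) = ∑ k ∈ range (J + 1), x ^ k := by
    simpa using sum_range_reflect (fun k => x ^ k) (J + 1)
  rw [sum_congr rfl hterm, sum_sub_distrib, sum_sub_distrib, hreflect, sum_const, card_range,
    nsmul_eq_mul]
  push_cast
  linear_combination -2 * mul_neg_geom_sum x (J + 1)

theorem sum_range_one_sub_pow_mul_one_sub_pow_pos {R : Type*} [CommRing R] [LinearOrder R]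
    [IsStrictOrderedRing R] {x : R} (hx₀ : 0 ≤ x) (hx₁ : x < 1) {J : ℕ} (hJ : 2 ≤ J) :
    0 < ∑ k ∈ range (J + 1), (1 - x ^ k) * (1 - x ^ (J - k)) := by
  refine sum_pos' (fun k _ => mul_nonneg ?_ ?_) ⟨1, by simp; omega, mul_pos ?_ ?_⟩
  · exact sub_nonneg.mpr (pow_le_one₀ hx₀ hx₁.le)
  · exact sub_nonneg.mpr (pow_le_one₀ hx₀ hx₁.le)
  · exact sub_pos.mpr (pow_lt_one₀ hx₀ hx₁ one_ne_zero)
  · exact sub_pos.mpr (pow_lt_one₀ hx₀ hx₁ (by omega))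

noncomputable def futurity (J : ℕ) (z : ℝ) : ℝ := J * (1 - z) * z ^ J / (1 - z ^ J)

noncomputable def futurityDeriv (J : ℕ) (x : ℝ) : ℝ :=
  J * x ^ (J - 1) * (J - (J + 1) * x + x ^ (J + 1)) / (1 - x ^ J) ^ 2

lemma hasDerivAt_futurity {J : ℕ} {x : ℝ} (hx : x ^ J ≠ 1) :
    HasDerivAt (futurity J) (futurityDeriv J x) x := by
  have hJ : J ≠ 0 := by rintro rfl; simp at hx
  obtain ⟨n, rfl⟩ := Nat.exists_eq_add_of_le' (Nat.pos_of_ne_zero hJ)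
  have hD : 1 - x ^ (n + 1) ≠ 0 := sub_ne_zero.mpr (Ne.symm hx)
  have h := ((((hasDerivAt_id x).const_sub 1).const_mul ((n + 1 : ℕ) : ℝ)).mul
    (hasDerivAt_pow (n + 1) x)).div ((hasDerivAt_pow (n + 1) x).const_sub 1) hD
  refine h.congr_deriv ?_
  simp only [futurityDeriv, Nat.add_sub_cancel, Pi.mul_apply, id]
  field_simp
  push_cast
  ring

lemma hasDerivAt_futurityDeriv {J : ℕ} (hJ : 2 ≤ J) {x : ℝ} (hx : x ^ J ≠ 1) :
    HasDerivAt (futurityDeriv J)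
      (J ^ 2 * x ^ (J - 2) * ((J - 1) - (J + 1) * x + (J + 1) * x ^ J - (J - 1) * x ^ (J + 1))
        / (1 - x ^ J) ^ 3) x := by
  obtain ⟨n, rfl⟩ := Nat.exists_eq_add_of_le' hJ
  have hD : 1 - x ^ (n + 2) ≠ 0 := sub_ne_zero.mpr (Ne.symm hx)
  have hnum := ((hasDerivAt_pow (n + 1) x).const_mul ((n + 2 : ℕ) : ℝ)).mul
    ((((hasDerivAt_id x).const_mul (((n + 2 : ℕ) : ℝ) + 1)).const_sub ((n + 2 : ℕ) : ℝ)).add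
      (hasDerivAt_pow (n + 3) x))
  have h := hnum.div (((hasDerivAt_pow (n + 2) x).const_sub 1).pow 2) (pow_ne_zero 2 hD)
  unfold futurityDeriv
  refine h.congr_deriv ?_
  simp only [Nat.add_sub_cancel, Pi.mul_apply, Pi.add_apply, Pi.pow_apply, id]
  field_simp
  push_cast
  ring

/-- For every integer `J ≥ 2`, the function `f(z) = J(1-z)z^J/(1-z^J)` is strictly convex
on the open interval `(0,1)`. -/
theorem futurity_f_strictConvexOn (J : ℕ) (hJ : 2 ≤ J) :
    StrictConvexOn ℝ (Set.Ioo (0 : ℝ) 1)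
      (fun z : ℝ => (J : ℝ) * (1 - z) * z ^ J / (1 - z ^ J)) := by
  have hpow_lt : ∀ x ∈ Set.Ioo (0 : ℝ) 1, x ^ J < 1 :=
    fun x hx => pow_lt_one₀ hx.1.le hx.2 (by omega)
  refine strictConvexOn_of_hasDerivAt2_pos (convex_Ioo 0 1) isOpen_Ioo
    (fun x hx => hasDerivAt_futurity (hpow_lt x hx).ne)
    (fun x hx => hasDerivAt_futurityDeriv hJ (hpow_lt x hx).ne) fun x hx => ?_
  rw [← sum_range_one_sub_pow_mul_one_sub_pow_mul_one_sub]
  have hsum := sum_range_one_sub_pow_mul_one_sub_pow_pos hx.1.le hx.2 hJ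
  have hden := sub_pos.mpr (hpow_lt x hx)
  have hx₁ := sub_pos.mpr hx.2
  have hx₀ := hx.1
  positivity
end

section
/- For any nonrandom periodic pattern strategy D with r As and s Bs, the following identity holds: Σ_{k=1}^{r+s} Σ_{j=1}^{r+s} p_j Π_{i=j+1}^{j+2k} q_i = Σ_{k=2}^{2(r+s)+1} Σ_{j=1}^{r+s} (−1)^k Π_{i=j}^{j+k−1} q_i. -/
open Finset
open scoped Classical

private lemma aux_alternating (G : ℕ → ℝ) (n : ℕ) :
    ∑ k ∈ Finset.Icc 1 n, (G (2 * k - 1) - G (2 * k))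
      = ∑ m ∈ Finset.Icc 2 (2 * n + 1), (-1 : ℝ) ^ m * G (m - 1) := by
  induction n with
  | zero => simp
  | succ n ih =>
    rw [Finset.sum_Icc_succ_top (by omega : 1 ≤ n + 1),
      show 2 * (n + 1) + 1 = (2 * n + 2) + 1 from by ring,
      Finset.sum_Icc_succ_top (by omega : 2 ≤ 2 * n + 2 + 1),
      show 2 * n + 2 = (2 * n + 1) + 1 from by ring,
      Finset.sum_Icc_succ_top (by omega : 2 ≤ 2 * n + 1 + 1), ih]
    have he : ((-1 : ℝ)) ^ (2 * n + 1 + 1) = 1 := Even.neg_one_pow ⟨n + 1, by ring⟩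
    have ho : ((-1 : ℝ)) ^ (2 * n + 1 + 1 + 1) = -1 := Odd.neg_one_pow ⟨n + 1, by ring⟩
    rw [he, ho, show 2 * n + 1 + 1 - 1 = 2 * (n + 1) - 1 from by omega,
      show 2 * n + 1 + 1 + 1 - 1 = 2 * (n + 1) from by omega]
    ring

/-- For any nonrandom periodic pattern strategy `D` with `r` `A`s and `s` `B`s,
`Σ_{k=1}^{r+s} Σ_{j=1}^{r+s} p_j Π_{i=j+1}^{j+2k} q_i
  = Σ_{k=2}^{2(r+s)+1} Σ_{j=1}^{r+s} (−1)^k Π_{i=j}^{j+k−1} q_i`,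
where `q_i = 1 - p_i`. -/
theorem strategy_sum_identity
    (pA pB : ℝ) (hpA : pA ∈ Set.Ioo (0 : ℝ) 1) (hpB : pB ∈ Set.Ioo (0 : ℝ) 1)
    (r s : ℕ) (hr : 1 ≤ r) (hs : 1 ≤ s)
    (p : ℕ → ℝ)
    (hper : ∀ i, p (i + (r + s)) = p i)
    (hval : ∀ i, p i = pA ∨ p i = pB)
    (hcardA : ((Finset.Icc 1 (r + s)).filter fun i => p i = pA).card = r)
    (hcardB : ((Finset.Icc 1 (r + s)).filter fun i => p i = pB).card = s) :
    ∑ k ∈ Finset.Icc 1 (r + s), ∑ j ∈ Finset.Icc 1 (r + s),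
        p j * ∏ i ∈ Finset.Icc (j + 1) (j + 2 * k), (1 - p i)
      = ∑ k ∈ Finset.Icc 2 (2 * (r + s) + 1), ∑ j ∈ Finset.Icc 1 (r + s),
          (-1 : ℝ) ^ k * ∏ i ∈ Finset.Icc j (j + k - 1), (1 - p i) := by
  set n := r + s with hn
  have hn1 : 1 ≤ n := le_trans hr (Nat.le_add_right r s)
  -- products are periodic with period n
  have prodA : ∀ a b : ℕ, ∏ i ∈ Finset.Icc (a + n) (b + n), (1 - p i)
      = ∏ i ∈ Finset.Icc a b, (1 - p i) := by
    intro a b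
    rw [← Finset.map_add_right_Icc, Finset.prod_map]
    simp only [addRightEmbedding_apply]
    exact Finset.prod_congr rfl fun i _ => by rw [hper i]
  -- shifting a periodic summand by one does not change the sum over a full period
  have shift : ∀ F : ℕ → ℝ, (∀ j, F (j + n) = F j) →
      ∑ j ∈ Finset.Icc 1 n, F (j + 1) = ∑ j ∈ Finset.Icc 1 n, F j := by
    intro F hF
    have h1 : ∑ j ∈ Finset.Icc 1 n, F (j + 1) = ∑ j ∈ Finset.Icc 2 (n + 1), F j := by
      rw [show (2 : ℕ) = 1 + 1 from rfl, show n + 1 = n + 1 from rfl,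
        ← Finset.map_add_right_Icc, Finset.sum_map]
      rfl
    rw [h1, Finset.sum_Icc_succ_top (by omega : 2 ≤ n + 1)]
    rw [Finset.Icc_eq_cons_Ioc hn1, Finset.sum_cons, ← Finset.Icc_add_one_left_eq_Ioc]
    have h2 : F (n + 1) = F 1 := by rw [show n + 1 = 1 + n from by omega, hF 1]
    rw [h2]; ring
  -- rewrite the left side
  have step1 : ∀ k ∈ Finset.Icc 1 n,
      ∑ j ∈ Finset.Icc 1 n, p j * ∏ i ∈ Finset.Icc (j + 1) (j + 2 * k), (1 - p i)
        = (∑ j ∈ Finset.Icc 1 n, ∏ i ∈ Finset.Icc j (j + (2 * k - 1)), (1 - p i))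
          - ∑ j ∈ Finset.Icc 1 n, ∏ i ∈ Finset.Icc j (j + 2 * k), (1 - p i) := by
    intro k hk
    have hk1 : 1 ≤ k := (Finset.mem_Icc.mp hk).1
    have e1 : ∀ j : ℕ, p j * ∏ i ∈ Finset.Icc (j + 1) (j + 2 * k), (1 - p i)
        = (∏ i ∈ Finset.Icc (j + 1) ((j + 1) + (2 * k - 1)), (1 - p i))
          - ∏ i ∈ Finset.Icc j (j + 2 * k), (1 - p i) := by
      intro j
      have hsplit : ∏ i ∈ Finset.Icc j (j + 2 * k), (1 - p i)
          = (1 - p j) * ∏ i ∈ Finset.Icc (j + 1) (j + 2 * k), (1 - p i) := by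
        rw [Finset.Icc_eq_cons_Ioc (by omega), Finset.prod_cons, Finset.Icc_add_one_left_eq_Ioc]
      rw [show (j + 1) + (2 * k - 1) = j + 2 * k from by omega, hsplit]
      ring
    rw [Finset.sum_congr rfl fun j _ => e1 j, Finset.sum_sub_distrib]
    congr 1
    exact shift (fun j => ∏ i ∈ Finset.Icc j (j + (2 * k - 1)), (1 - p i))
      (fun j => by
        show ∏ i ∈ Finset.Icc (j + n) (j + n + (2 * k - 1)), (1 - p i)
          = ∏ i ∈ Finset.Icc j (j + (2 * k - 1)), (1 - p i)
        rw [show j + n + (2 * k - 1) = (j + (2 * k - 1)) + n from by omega]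
        exact prodA j (j + (2 * k - 1)))
  -- rewrite the right side
  have step2 : ∀ m ∈ Finset.Icc 2 (2 * n + 1),
      ∑ j ∈ Finset.Icc 1 n, (-1 : ℝ) ^ m * ∏ i ∈ Finset.Icc j (j + m - 1), (1 - p i)
        = (-1 : ℝ) ^ m * ∑ j ∈ Finset.Icc 1 n,
            ∏ i ∈ Finset.Icc j (j + (m - 1)), (1 - p i) := by
    intro m hm
    have hm2 : 2 ≤ m := (Finset.mem_Icc.mp hm).1
    rw [Finset.mul_sum]
    refine Finset.sum_congr rfl fun j _ => ?_
    rw [show j + m - 1 = j + (m - 1) from by omega]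
  rw [Finset.sum_congr rfl step1, Finset.sum_congr rfl step2]
  exact aux_alternating
    (fun t => ∑ j ∈ Finset.Icc 1 n, ∏ i ∈ Finset.Icc j (j + t), (1 - p i)) n
end

section
/- For any nonrandom periodic pattern strategy D with r As and s Bs, the following identity holds: Σ_{k=1}^{r+s} Σ_{j=1}^{r+s} p_j Π_{i=j+1}^{j+2k} q_i = (1 + (−1)^{r+s} q_A^r q_B^s) · (Σ_{k=2}^{r+s} Σ_{j=1}^{r+s} (−1)^k Π_{i=j}^{j+k−1} q_i) + ((−1)^{r+s+1} − q_A^r q_B^s) · (r q_A^{r+1} q_B^s + s q_A^r q_B^{s+1}). -/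
open Finset
open scoped Classical

namespace StrategyAuxQ

/-- Window product of `m` factors `(1 - p i)` starting at `j`. -/
noncomputable def W (p : ℕ → ℝ) (j m : ℕ) : ℝ := ∏ i ∈ Finset.range m, (1 - p (j + i))

/-- Sum of window products of length `m` over one period. -/
noncomputable def S (p : ℕ → ℝ) (n m : ℕ) : ℝ := ∑ j ∈ Finset.range n, W p (j + 1) m

lemma W_split (p : ℕ → ℝ) (j a b : ℕ) : W p j (a + b) = W p j a * W p (j + a) b := by
  unfold W
  rw [Finset.prod_range_add]
  congr 1
  exact Finset.prod_congr rfl fun i _ => by rw [add_assoc]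

lemma W_one (p : ℕ → ℝ) (j : ℕ) : W p j 1 = 1 - p j := by simp [W]

lemma prod_Icc_W (p : ℕ → ℝ) (a c : ℕ) :
    ∏ i ∈ Finset.Icc a (a + c), (1 - p i) = W p a (c + 1) := by
  rw [← Finset.Ico_add_one_right_eq_Icc, Finset.prod_Ico_eq_prod_range,
    show a + c + 1 - a = c + 1 by omega]
  rfl

lemma sum_Icc_eq_range (f : ℕ → ℝ) (a b c : ℕ) (h : b + 1 - a = c) :
    ∑ j ∈ Finset.Icc a b, f j = ∑ i ∈ Finset.range c, f (a + i) := by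
  subst h
  rw [← Finset.Ico_add_one_right_eq_Icc, Finset.sum_Ico_eq_sum_range]

section

variable (p : ℕ → ℝ) (n : ℕ) (hper : ∀ i, p (i + n) = p i) (hq0 : ∀ i, (1 : ℝ) - p i ≠ 0)

include hper in
lemma W_shift (j m : ℕ) : W p (j + n) m = W p j m := by
  unfold W
  refine Finset.prod_congr rfl fun i _ => ?_
  rw [show j + n + i = (j + i) + n by ring, hper]

include hper hq0 in
lemma W_step (j : ℕ) : W p (j + 1) n = W p j n := by
  have h1 : W p j (1 + n) = (1 - p j) * W p (j + 1) n := by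
    rw [W_split, W_one]
  have h2 : W p j (1 + n) = W p j n * (1 - p j) := by
    rw [add_comm 1 n, W_split, W_one, hper]
  have h3 : (1 - p j) * W p (j + 1) n = (1 - p j) * W p j n := by
    rw [← h1, h2]; ring
  exact mul_left_cancel₀ (hq0 j) h3

include hper hq0 in
lemma W_const : ∀ j, W p j n = W p 1 n := by
  intro j
  induction j with
  | zero => exact (W_step p n hper hq0 0).symm
  | succ j ih => rw [W_step p n hper hq0 j, ih]

include hper hq0 in
lemma S_rec (m : ℕ) : S p n (m + n) = W p 1 n * S p n m := by
  unfold S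
  rw [Finset.mul_sum]
  refine Finset.sum_congr rfl fun j _ => ?_
  rw [W_split, W_const p n hper hq0 (j + 1 + m), mul_comm]

include hper in
lemma S_shifted (m : ℕ) : ∑ j ∈ Finset.range n, W p (j + 2) m = S p n m := by
  have hW1 : W p (n + 1) m = W p 1 m := by
    rw [show n + 1 = 1 + n by ring, W_shift p n hper 1 m]
  have h1 := Finset.sum_range_succ (fun j => W p (j + 1) m) n
  have h2 := Finset.sum_range_succ' (fun j => W p (j + 1) m) n
  have key := h2.symm.trans h1
  simp only [Nat.zero_add] at key
  have e : ∑ j ∈ Finset.range n, W p (j + 2) m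
      = ∑ j ∈ Finset.range n, W p (j + 1 + 1) m :=
    Finset.sum_congr rfl fun j _ => by congr 1
  rw [e]
  unfold S
  rw [hW1] at key
  linarith

end

lemma pairing (F : ℕ → ℝ) :
    ∀ N, ∑ k ∈ Finset.range N, (F (2 * k + 2) - F (2 * k + 3))
      = ∑ j ∈ Finset.range (2 * N), (-1 : ℝ) ^ (j + 2) * F (j + 2) := by
  intro N
  induction N with
  | zero => simp
  | succ N ih =>
    have e1 : ∑ j ∈ Finset.range (2 * (N + 1)), (-1 : ℝ) ^ (j + 2) * F (j + 2)
        = (∑ j ∈ Finset.range (2 * N), (-1 : ℝ) ^ (j + 2) * F (j + 2))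
          + (-1 : ℝ) ^ (2 * N + 2) * F (2 * N + 2)
          + (-1 : ℝ) ^ (2 * N + 1 + 2) * F (2 * N + 1 + 2) := by
      rw [show 2 * (N + 1) = (2 * N + 1) + 1 by ring, Finset.sum_range_succ,
        Finset.sum_range_succ]
    rw [Finset.sum_range_succ, ih, e1,
      show ((-1 : ℝ)) ^ (2 * N + 2) = 1 from Even.neg_one_pow ⟨N + 1, by ring⟩,
      show ((-1 : ℝ)) ^ (2 * N + 1 + 2) = -1 from Odd.neg_one_pow ⟨N + 1, by ring⟩,
      show 2 * N + 1 + 2 = 2 * N + 3 by ring]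
    ring

lemma main (p : ℕ → ℝ) (m : ℕ)
    (hper : ∀ i, p (i + (m + 2)) = p i) (hq0 : ∀ i, (1 : ℝ) - p i ≠ 0) :
    ∑ k ∈ Finset.Icc 1 (m + 2), ∑ j ∈ Finset.Icc 1 (m + 2),
        p j * ∏ i ∈ Finset.Icc (j + 1) (j + 2 * k), (1 - p i)
      = (1 + (-1 : ℝ) ^ (m + 2) * W p 1 (m + 2)) *
          (∑ k ∈ Finset.Icc 2 (m + 2), ∑ j ∈ Finset.Icc 1 (m + 2),
            (-1 : ℝ) ^ k * ∏ i ∈ Finset.Icc j (j + k - 1), (1 - p i))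
        + ((-1 : ℝ) ^ (m + 3) - W p 1 (m + 2)) * (W p 1 (m + 2) * S p (m + 2) 1) := by
  set n := m + 2 with hn
  set Q := W p 1 n with hQ
  set T : ℝ := ∑ j ∈ Finset.range (m + 1), (-1 : ℝ) ^ (j + 2) * S p n (j + 2) with hT
  have hterm : ∀ j K : ℕ, p j * W p (j + 1) K = W p (j + 1) K - W p j (K + 1) := by
    intro j K
    have h := W_split p j 1 K
    rw [W_one] at h
    rw [show K + 1 = 1 + K by ring, h]
    ring
  have hIccW1 : ∀ K, ∑ j ∈ Finset.Icc 1 n, W p (j + 1) K = S p n K := by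
    intro K
    rw [sum_Icc_eq_range (fun j => W p (j + 1) K) 1 n n (by omega),
      ← S_shifted p n hper K]
    exact Finset.sum_congr rfl fun j _ => by congr 1; omega
  have hIccW0 : ∀ K, ∑ j ∈ Finset.Icc 1 n, W p j K = S p n K := by
    intro K
    rw [sum_Icc_eq_range (fun j => W p j K) 1 n n (by omega)]
    exact Finset.sum_congr rfl fun j _ => by congr 1; omega
  -- Step 1: LHS equals paired sum of S
  have h1 : ∑ k ∈ Finset.Icc 1 n, ∑ j ∈ Finset.Icc 1 n,
        p j * ∏ i ∈ Finset.Icc (j + 1) (j + 2 * k), (1 - p i)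
      = ∑ k ∈ Finset.range n, (S p n (2 * k + 2) - S p n (2 * k + 3)) := by
    rw [sum_Icc_eq_range
      (fun k => ∑ j ∈ Finset.Icc 1 n, p j * ∏ i ∈ Finset.Icc (j + 1) (j + 2 * k), (1 - p i))
      1 n n (by omega)]
    refine Finset.sum_congr rfl fun k _ => ?_
    have hinner : ∀ j ∈ Finset.Icc 1 n,
        p j * ∏ i ∈ Finset.Icc (j + 1) (j + 2 * (1 + k)), (1 - p i)
          = W p (j + 1) (2 * k + 2) - W p j (2 * k + 3) := by
      intro j _
      have e : j + 2 * (1 + k) = (j + 1) + (2 * k + 1) := by ring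
      rw [e, prod_Icc_W, show 2 * k + 1 + 1 = 2 * k + 2 by ring, hterm j (2 * k + 2)]
    rw [Finset.sum_congr rfl hinner, Finset.sum_sub_distrib, hIccW1, hIccW0]
  rw [h1, pairing (S p n) n]
  -- Step 3: split the range (2n) sum
  have h3 : ∑ j ∈ Finset.range (2 * n), (-1 : ℝ) ^ (j + 2) * S p n (j + 2)
      = T + ∑ i ∈ Finset.range (m + 3), (-1 : ℝ) ^ (m + 1 + i + 2) * S p n (m + 1 + i + 2) := by
    rw [show 2 * n = (m + 1) + (m + 3) by omega, Finset.sum_range_add]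
  rw [h3]
  -- Step 4/5: evaluate the tail
  have h4 : ∀ i, (-1 : ℝ) ^ (m + 1 + i + 2) * S p n (m + 1 + i + 2)
      = (-1 : ℝ) ^ (m + 3 + i) * (Q * S p n (i + 1)) := by
    intro i
    have harg : m + 1 + i + 2 = (i + 1) + n := by omega
    rw [harg, S_rec p n hper hq0 (i + 1)]
    congr 2
    omega
  have e0 : ∑ i ∈ Finset.range (m + 3), (-1 : ℝ) ^ (m + 3 + i) * (Q * S p n (i + 1))
      = (∑ i ∈ Finset.range (m + 2), (-1 : ℝ) ^ (m + 3 + (i + 1)) * (Q * S p n (i + 1 + 1)))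
        + (-1 : ℝ) ^ (m + 3 + 0) * (Q * S p n (0 + 1)) :=
    Finset.sum_range_succ' _ (m + 2)
  have e1 : ∑ i ∈ Finset.range (m + 2), (-1 : ℝ) ^ (m + 3 + (i + 1)) * (Q * S p n (i + 1 + 1))
      = (∑ i ∈ Finset.range (m + 1), (-1 : ℝ) ^ (m + 3 + (i + 1)) * (Q * S p n (i + 1 + 1)))
        + (-1 : ℝ) ^ (m + 3 + (m + 1 + 1)) * (Q * S p n (m + 1 + 1 + 1)) :=
    Finset.sum_range_succ _ (m + 1)
  have hlast : (-1 : ℝ) ^ (m + 3 + (m + 1 + 1)) * (Q * S p n (m + 1 + 1 + 1))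
      = - (Q * (Q * S p n 1)) := by
    rw [show ((-1 : ℝ)) ^ (m + 3 + (m + 1 + 1)) = -1 from Odd.neg_one_pow ⟨m + 2, by ring⟩,
      show m + 1 + 1 + 1 = 1 + n by omega, S_rec p n hper hq0 1]
    ring
  have hmid : ∑ i ∈ Finset.range (m + 1), (-1 : ℝ) ^ (m + 3 + (i + 1)) * (Q * S p n (i + 1 + 1))
      = (-1 : ℝ) ^ (m + 2) * Q * T := by
    rw [hT, Finset.mul_sum]
    refine Finset.sum_congr rfl fun i _ => ?_
    rw [show m + 3 + (i + 1) = (m + 2) + (i + 2) by ring, pow_add,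
      show i + 1 + 1 = i + 2 by ring]
    ring
  have htail : ∑ i ∈ Finset.range (m + 3), (-1 : ℝ) ^ (m + 1 + i + 2) * S p n (m + 1 + i + 2)
      = (-1 : ℝ) ^ (m + 3) * (Q * S p n 1) + (-1 : ℝ) ^ (m + 2) * Q * T
        - Q * (Q * S p n 1) := by
    rw [Finset.sum_congr rfl fun i _ => h4 i, e0, e1, hlast, hmid]
    simp only [Nat.add_zero, Nat.zero_add]
    ring
  rw [htail]
  -- Step 6: the double sum on the RHS equals T
  have hTsum : ∑ k ∈ Finset.Icc 2 n, ∑ j ∈ Finset.Icc 1 n,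
        (-1 : ℝ) ^ k * ∏ i ∈ Finset.Icc j (j + k - 1), (1 - p i) = T := by
    rw [sum_Icc_eq_range
      (fun k => ∑ j ∈ Finset.Icc 1 n, (-1 : ℝ) ^ k * ∏ i ∈ Finset.Icc j (j + k - 1), (1 - p i))
      2 n (m + 1) (by omega), hT]
    refine Finset.sum_congr rfl fun k _ => ?_
    have hinner : ∀ j ∈ Finset.Icc 1 n,
        (-1 : ℝ) ^ (2 + k) * ∏ i ∈ Finset.Icc j (j + (2 + k) - 1), (1 - p i)
          = (-1 : ℝ) ^ (2 + k) * W p j (k + 2) := by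
      intro j _
      rw [show j + (2 + k) - 1 = j + (k + 1) by omega, prod_Icc_W,
        show k + 1 + 1 = k + 2 by omega]
    rw [Finset.sum_congr rfl hinner, ← Finset.mul_sum, hIccW0,
      show 2 + k = k + 2 by ring]
  rw [hTsum]
  ring

end StrategyAuxQ

/-- For any nonrandom periodic pattern strategy `D` with `r` `A`s and `s` `B`s,
`Σ_{k=1}^{r+s} Σ_{j=1}^{r+s} p_j Π_{i=j+1}^{j+2k} q_i
  = (1 + (−1)^{r+s} q_A^r q_B^s) · (Σ_{k=2}^{r+s} Σ_{j=1}^{r+s} (−1)^k Π_{i=j}^{j+k−1} q_i)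
    + ((−1)^{r+s+1} − q_A^r q_B^s) · (r q_A^{r+1} q_B^s + s q_A^r q_B^{s+1})`,
where `q_A = 1 - p_A`, `q_B = 1 - p_B`, `q_i = 1 - p_i`. -/
theorem strategy_sum_identity_reduced
    (pA pB qA qB : ℝ) (hpA : pA ∈ Set.Ioo (0 : ℝ) 1) (hpB : pB ∈ Set.Ioo (0 : ℝ) 1)
    (hqA : qA = 1 - pA) (hqB : qB = 1 - pB)
    (r s : ℕ) (hr : 1 ≤ r) (hs : 1 ≤ s)
    (p : ℕ → ℝ)
    (hper : ∀ i, p (i + (r + s)) = p i)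
    (hval : ∀ i, p i = pA ∨ p i = pB)
    (hcardA : ((Finset.Icc 1 (r + s)).filter fun i => p i = pA).card = r)
    (hcardB : ((Finset.Icc 1 (r + s)).filter fun i => p i = pB).card = s) :
    ∑ k ∈ Finset.Icc 1 (r + s), ∑ j ∈ Finset.Icc 1 (r + s),
        p j * ∏ i ∈ Finset.Icc (j + 1) (j + 2 * k), (1 - p i)
      = (1 + (-1 : ℝ) ^ (r + s) * qA ^ r * qB ^ s) *
          (∑ k ∈ Finset.Icc 2 (r + s), ∑ j ∈ Finset.Icc 1 (r + s),
            (-1 : ℝ) ^ k * ∏ i ∈ Finset.Icc j (j + k - 1), (1 - p i))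
        + ((-1 : ℝ) ^ (r + s + 1) - qA ^ r * qB ^ s) *
            ((r : ℝ) * qA ^ (r + 1) * qB ^ s + (s : ℝ) * qA ^ r * qB ^ (s + 1)) := by
  obtain ⟨m, hm⟩ : ∃ m, r + s = m + 2 := ⟨r + s - 2, by omega⟩
  have hq0 : ∀ i, (1 : ℝ) - p i ≠ 0 := by
    intro i
    rcases hval i with h | h <;> rw [h]
    exacts [sub_ne_zero_of_ne (ne_of_gt hpA.2), sub_ne_zero_of_ne (ne_of_gt hpB.2)]
  have hfiltercard : (((Finset.Icc 1 (r + s)).filter fun i => ¬ p i = pA).card) = s := by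
    have h := Finset.card_filter_add_card_filter_not
      (s := Finset.Icc 1 (r + s)) (p := fun i => p i = pA)
    rw [hcardA, Nat.card_Icc] at h
    omega
  have hQval : StrategyAuxQ.W p 1 (r + s) = qA ^ r * qB ^ s := by
    have e := StrategyAuxQ.prod_Icc_W p 1 (r + s - 1)
    rw [show 1 + (r + s - 1) = r + s by omega, show r + s - 1 + 1 = r + s by omega] at e
    rw [← e,
      ← Finset.prod_filter_mul_prod_filter_not (Finset.Icc 1 (r + s)) (fun i => p i = pA)]
    have hA : ∏ i ∈ (Finset.Icc 1 (r + s)).filter (fun i => p i = pA), (1 - p i)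
        = qA ^ r := by
      have : ∏ i ∈ (Finset.Icc 1 (r + s)).filter (fun i => p i = pA), (1 - p i)
          = qA ^ (((Finset.Icc 1 (r + s)).filter fun i => p i = pA).card) := by
        rw [← Finset.prod_const]
        refine Finset.prod_congr rfl fun i hi => ?_
        rw [(Finset.mem_filter.mp hi).2, hqA]
      rw [this, hcardA]
    have hB : ∏ i ∈ (Finset.Icc 1 (r + s)).filter (fun i => ¬ p i = pA), (1 - p i)
        = qB ^ s := by
      have : ∏ i ∈ (Finset.Icc 1 (r + s)).filter (fun i => ¬ p i = pA), (1 - p i)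
          = qB ^ (((Finset.Icc 1 (r + s)).filter fun i => ¬ p i = pA).card) := by
        rw [← Finset.prod_const]
        refine Finset.prod_congr rfl fun i hi => ?_
        have hne := (Finset.mem_filter.mp hi).2
        rcases hval i with h | h
        · exact absurd h hne
        · rw [h, hqB]
      rw [this, hfiltercard]
    rw [hA, hB]
  have hS1val : StrategyAuxQ.S p (r + s) 1 = (r : ℝ) * qA + (s : ℝ) * qB := by
    unfold StrategyAuxQ.S
    have e : ∑ j ∈ Finset.range (r + s), StrategyAuxQ.W p (j + 1) 1
        = ∑ j ∈ Finset.Icc 1 (r + s), (1 - p j) := by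
      rw [StrategyAuxQ.sum_Icc_eq_range (fun j => 1 - p j) 1 (r + s) (r + s) (by omega)]
      refine Finset.sum_congr rfl fun j _ => ?_
      rw [StrategyAuxQ.W_one, show j + 1 = 1 + j by omega]
    rw [e,
      ← Finset.sum_filter_add_sum_filter_not (Finset.Icc 1 (r + s)) (fun i => p i = pA)]
    have hA : ∑ i ∈ (Finset.Icc 1 (r + s)).filter (fun i => p i = pA), (1 - p i)
        = (r : ℝ) * qA := by
      have : ∀ i ∈ (Finset.Icc 1 (r + s)).filter (fun i => p i = pA), (1 - p i) = qA :=
        fun i hi => by rw [(Finset.mem_filter.mp hi).2, hqA]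
      rw [Finset.sum_congr rfl this, Finset.sum_const, hcardA, nsmul_eq_mul]
    have hB : ∑ i ∈ (Finset.Icc 1 (r + s)).filter (fun i => ¬ p i = pA), (1 - p i)
        = (s : ℝ) * qB := by
      have : ∀ i ∈ (Finset.Icc 1 (r + s)).filter (fun i => ¬ p i = pA), (1 - p i) = qB := by
        intro i hi
        have hne := (Finset.mem_filter.mp hi).2
        rcases hval i with h | h
        · exact absurd h hne
        · rw [h, hqB]
      rw [Finset.sum_congr rfl this, Finset.sum_const, hfiltercard, nsmul_eq_mul]
    rw [hA, hB]
  have hmain := StrategyAuxQ.main p m (by rw [← hm]; exact hper) hq0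
  rw [← hm] at hmain
  rw [hmain, hQval, hS1val, show m + 3 = r + s + 1 by omega]
  ring
end

section
/- (Lemma 3.) For any nonrandom periodic pattern strategy D with r As and s Bs, the casino's asymptotic profit per coup satisfies R_D = R_0 − 2 Q_0 S_0, where R_0 = (2/(r+s)) ( r q_A²/(1+q_A) + s q_B²/(1+q_B) + (−1)^{r+s}(r+s)(r q_A^{r+1} q_B^s + s q_A^r q_B^{s+1}) S_0 ), Q_0 = Σ_{j=1}^{r+s} Σ_{k=2}^{r+s} (−1)^k Π_{i=j}^{j+k−1} q_i, and S_0 = (1 + (−1)^{r+s} q_A^r q_B^s) / ((r+s)(1 − (q_A^r q_B^s)²)). -/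
open Finset
open scoped Classical

/-- `p°` for a single arm with win probability `x` (Futurity parameter `J = 2`):
`p° = x (1-x)² / (1 - (1-x)²)`. -/
noncomputable def poArm (x : ℝ) : ℝ := x * (1 - x) ^ 2 / (1 - (1 - x) ^ 2)

/-- `p°_D = (1/(r+s)) Σ_{k=1}^{r+s} (Σ_{j=1}^{r+s} p_j Π_{i=j+1}^{j+2k} q_i) / (1 − (q_A^r q_B^s)²)`. -/
noncomputable def pCircD (p : ℕ → ℝ) (r s : ℕ) (qA qB : ℝ) : ℝ :=
  (1 / ((r + s : ℕ) : ℝ)) *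
    ∑ k ∈ Finset.Icc 1 (r + s),
      (∑ j ∈ Finset.Icc 1 (r + s),
          p j * ∏ i ∈ Finset.Icc (j + 1) (j + 2 * k), (1 - p i)) /
        (1 - (qA ^ r * qB ^ s) ^ 2)

/-- The casino's asymptotic profit per coup `R_D = 2(r p°_A + s p°_B)/(r+s) − 2 p°_D`. -/
noncomputable def RD (p : ℕ → ℝ) (r s : ℕ) (pA pB : ℝ) : ℝ :=
  2 * ((r : ℝ) * poArm pA + (s : ℝ) * poArm pB) / ((r + s : ℕ) : ℝ)
    - 2 * pCircD p r s (1 - pA) (1 - pB)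


noncomputable def Wq (p : ℕ → ℝ) (j m : ℕ) : ℝ := ∏ i ∈ Finset.Ioc j (j + m), (1 - p i)

lemma Wq_split (p : ℕ → ℝ) (j m n : ℕ) : Wq p j (m + n) = Wq p j m * Wq p (j + m) n := by
  unfold Wq
  rw [show j + (m + n) = (j + m) + n by omega]
  exact (Finset.prod_Ioc_consecutive _ (Nat.le_add_right j m) (Nat.le_add_right (j+m) n)).symm

lemma Wq_one (p : ℕ → ℝ) (j : ℕ) : Wq p j 1 = 1 - p (j + 1) := by
  unfold Wq
  rw [show Finset.Ioc j (j+1) = {j+1} by rw [← Finset.Icc_add_one_left_eq_Ioc]; exact Finset.Icc_self _]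
  simp

lemma Wq_peel_first (p : ℕ → ℝ) (j m : ℕ) :
    Wq p j (m + 1) = (1 - p (j + 1)) * Wq p (j + 1) m := by
  rw [show m + 1 = 1 + m by omega, Wq_split, Wq_one]

lemma Wq_peel_last (p : ℕ → ℝ) (j m : ℕ) :
    Wq p j (m + 1) = Wq p j m * (1 - p (j + m + 1)) := by
  rw [Wq_split, Wq_one]

lemma Wq_per (p : ℕ → ℝ) (N : ℕ) (hper : ∀ i, p (i + N) = p i) (j m : ℕ) :
    Wq p (j + N) m = Wq p j m := by
  unfold Wq
  rw [show j + N + m = (j + m) + N by omega, ← Finset.map_add_right_Ioc, Finset.prod_map]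
  exact Finset.prod_congr rfl fun i _ => by simp [hper]

lemma Wq_full (p : ℕ → ℝ) (N : ℕ) (hN : 1 ≤ N) (hper : ∀ i, p (i + N) = p i) (j : ℕ) :
    Wq p j N = Wq p 0 N := by
  induction j with
  | zero => rfl
  | succ j ih =>
    obtain ⟨n, rfl⟩ : ∃ n, N = n + 1 := ⟨N - 1, by omega⟩
    rw [← ih, Wq_peel_last p (j+1) n, Wq_peel_first p j n,
      show j + 1 + n + 1 = (j + 1) + (n + 1) by omega, hper]
    ring

lemma sum_shift (N : ℕ) (hN : 1 ≤ N) (F : ℕ → ℝ) (hF : F (N + 1) = F 1) :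
    ∑ j ∈ Finset.Icc 1 N, F (j + 1) = ∑ j ∈ Finset.Icc 1 N, F j := by
  have h1 : ∑ j ∈ Finset.Icc 1 N, F (j + 1) = ∑ j ∈ Finset.Icc 2 (N + 1), F j := by
    rw [show Finset.Icc 2 (N+1) = (Finset.Icc 1 N).map (addRightEmbedding 1) by
      rw [Finset.map_add_right_Icc], Finset.sum_map]
    rfl
  rw [h1, Finset.sum_Icc_succ_top (by omega : 2 ≤ N + 1), hF,
    Finset.Icc_eq_cons_Ioc hN, Finset.sum_cons, ← Finset.Icc_add_one_left_eq_Ioc]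
  ring

lemma sum_pairs (G : ℕ → ℝ) (n : ℕ) :
    ∑ k ∈ Finset.Icc 1 n, (G (2 * k) + G (2 * k + 1)) = ∑ m ∈ Finset.Icc 2 (2 * n + 1), G m := by
  induction n with
  | zero => simp
  | succ n ih =>
    rw [Finset.sum_Icc_succ_top (by omega : 1 ≤ n + 1), ih,
      show 2 * (n + 1) + 1 = (2 * n + 1 + 1) + 1 by ring,
      show 2 * (n + 1) = 2 * n + 1 + 1 by ring,
      Finset.sum_Icc_succ_top (by omega : 2 ≤ 2 * n + 1 + 1 + 1),
      Finset.sum_Icc_succ_top (by omega : 2 ≤ 2 * n + 1 + 1)]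

    ring

noncomputable def gsum (p : ℕ → ℝ) (N k : ℕ) : ℝ := ∑ j ∈ Finset.Icc 1 N, Wq p j k

section
variable (p : ℕ → ℝ) (N : ℕ)

lemma gsum_per (hN : 1 ≤ N) (hper : ∀ i, p (i + N) = p i) (m : ℕ) :
    gsum p N (m + N) = Wq p 0 N * gsum p N m := by
  unfold gsum
  rw [Finset.mul_sum]
  refine Finset.sum_congr rfl fun j _ => ?_
  rw [Wq_split, Wq_full p N hN hper (j + m), mul_comm]

lemma gsum_prev (hN : 1 ≤ N) (hper : ∀ i, p (i + N) = p i) (k : ℕ) :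
    ∑ j ∈ Finset.Icc 1 N, Wq p (j - 1) k = gsum p N k := by
  have h := sum_shift N hN (fun j => Wq p (j - 1) k) (by
    simp only [Nat.add_sub_cancel, Nat.sub_self]
    have := Wq_per p N hper 0 k
    simpa using this)
  simp only [Nat.add_sub_cancel] at h
  exact h.symm

lemma gsum_sub (hN : 1 ≤ N) (hper : ∀ i, p (i + N) = p i) (m : ℕ) :
    ∑ j ∈ Finset.Icc 1 N, p j * Wq p j m = gsum p N m - gsum p N (m + 1) := by
  have h1 : gsum p N (m + 1) = ∑ j ∈ Finset.Icc 1 N, (1 - p j) * Wq p j m := by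
    unfold gsum
    rw [show (∑ j ∈ Finset.Icc 1 N, Wq p j (m+1))
        = ∑ j ∈ Finset.Icc 1 N, (1 - p (j+1)) * Wq p (j+1) m from
      Finset.sum_congr rfl fun j _ => Wq_peel_first p j m]
    exact sum_shift N hN (fun j => (1 - p j) * Wq p j m) (by
      show (1 - p (N+1)) * Wq p (N+1) m = (1 - p 1) * Wq p 1 m
      rw [show N + 1 = 1 + N by omega, hper, Wq_per p N hper 1 m])
  rw [h1]
  unfold gsum
  rw [← Finset.sum_sub_distrib]
  exact Finset.sum_congr rfl fun j _ => by ring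

lemma gsum_top (hN : 1 ≤ N) (hper : ∀ i, p (i + N) = p i) :
    gsum p N (N + 1) = Wq p 0 N * ∑ j ∈ Finset.Icc 1 N, (1 - p j) := by
  unfold gsum
  rw [show (∑ j ∈ Finset.Icc 1 N, Wq p j (N+1))
      = ∑ j ∈ Finset.Icc 1 N, Wq p 0 N * (1 - p (j+1)) from
    Finset.sum_congr rfl fun j _ => by
      rw [Wq_peel_last, Wq_full p N hN hper j, show j + N + 1 = (j+1) + N by omega, hper]]
  rw [← Finset.mul_sum]
  congr 1
  exact sum_shift N hN (fun j => 1 - p j) (by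
    show 1 - p (N+1) = 1 - p 1
    rw [show N + 1 = 1 + N by omega, hper])
end

lemma main_sum (p : ℕ → ℝ) (N : ℕ) (hN : 2 ≤ N) (hper : ∀ i, p (i + N) = p i) :
    ∑ k ∈ Finset.Icc 1 N, (∑ j ∈ Finset.Icc 1 N, p j * Wq p j (2*k))
      = (1 + (-1:ℝ)^N * Wq p 0 N) *
        ((∑ m ∈ Finset.Icc 2 N, (-1:ℝ)^m * gsum p N m) + (-1:ℝ)^(N+1) * gsum p N (N+1)) := by
  have hN1 : 1 ≤ N := by omega
  set G : ℕ → ℝ := fun m => (-1:ℝ)^m * gsum p N m with hG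
  have h1 : ∀ k, (∑ j ∈ Finset.Icc 1 N, p j * Wq p j (2*k)) = G (2*k) + G (2*k+1) := by
    intro k
    rw [gsum_sub p N hN1 hper]
    simp only [hG]
    have e1 : ((-1:ℝ))^(2*k) = 1 := by rw [pow_mul]; norm_num
    have e2 : ((-1:ℝ))^(2*k+1) = -1 := by rw [pow_succ, e1]; norm_num
    rw [e1, e2]; ring
  rw [Finset.sum_congr rfl fun k _ => h1 k, sum_pairs]
  have h2 : Finset.Icc 2 (2*N+1) = Finset.Ioc 1 (2*N+1) := by ext i; simp; omega
  have h3 : Finset.Icc 2 (N+1) = Finset.Ioc 1 (N+1) := by ext i; simp; omega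
  rw [h2, ← Finset.sum_Ioc_consecutive G (show 1 ≤ N+1 by omega) (show N+1 ≤ 2*N+1 by omega)]
  have h4 : ∑ m ∈ Finset.Ioc (N+1) (2*N+1), G m
      = ((-1:ℝ)^N * Wq p 0 N) * ∑ m ∈ Finset.Ioc 1 (N+1), G m := by
    rw [show Finset.Ioc (N+1) (2*N+1) = (Finset.Ioc 1 (N+1)).map (addRightEmbedding N) by
      rw [Finset.map_add_right_Ioc]; congr 1 <;> omega, Finset.sum_map, Finset.mul_sum]
    refine Finset.sum_congr rfl fun m _ => ?_
    show G (m + N) = _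
    simp only [hG]
    rw [pow_add, gsum_per p N hN1 hper]
    ring
  rw [h4]
  have h5 : ∑ m ∈ Finset.Ioc 1 (N+1), G m = (∑ m ∈ Finset.Icc 2 N, G m) + G (N+1) := by
    rw [← h3, Finset.sum_Icc_succ_top (show 2 ≤ N+1 by omega)]
  rw [h5]
  simp only [hG]
  ring

set_option maxHeartbeats 1600000 in
/-- Lemma 3: `R_D = R_0 − 2 Q_0 S_0`. -/
theorem lemma3_RD_eq
    (pA pB qA qB : ℝ) (hpA : pA ∈ Set.Ioo (0 : ℝ) 1) (hpB : pB ∈ Set.Ioo (0 : ℝ) 1)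
    (hqA : qA = 1 - pA) (hqB : qB = 1 - pB)
    (r s : ℕ) (hr : 1 ≤ r) (hs : 1 ≤ s)
    (p : ℕ → ℝ)
    (hper : ∀ i, p (i + (r + s)) = p i)
    (hval : ∀ i, p i = pA ∨ p i = pB)
    (hcardA : ((Finset.Icc 1 (r + s)).filter fun i => p i = pA).card = r)
    (hcardB : ((Finset.Icc 1 (r + s)).filter fun i => p i = pB).card = s)
    (S0 Q0 R0 : ℝ)
    (hS0 : S0 = (1 + (-1 : ℝ) ^ (r + s) * qA ^ r * qB ^ s) /
        (((r + s : ℕ) : ℝ) * (1 - (qA ^ r * qB ^ s) ^ 2)))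
    (hQ0 : Q0 = ∑ j ∈ Finset.Icc 1 (r + s), ∑ k ∈ Finset.Icc 2 (r + s),
        (-1 : ℝ) ^ k * ∏ i ∈ Finset.Icc j (j + k - 1), (1 - p i))
    (hR0 : R0 = (2 / ((r + s : ℕ) : ℝ)) *
        ((r : ℝ) * qA ^ 2 / (1 + qA) + (s : ℝ) * qB ^ 2 / (1 + qB) +
          (-1 : ℝ) ^ (r + s) * ((r + s : ℕ) : ℝ) *
            ((r : ℝ) * qA ^ (r + 1) * qB ^ s + (s : ℝ) * qA ^ r * qB ^ (s + 1)) * S0)) :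
    RD p r s pA pB = R0 - 2 * Q0 * S0 := by
  obtain ⟨hpA0, hpA1⟩ := hpA
  obtain ⟨hpB0, hpB1⟩ := hpB
  have hN2 : 2 ≤ r + s := by omega
  have hN1 : 1 ≤ r + s := by omega
  have hNR : ((r + s : ℕ) : ℝ) ≠ 0 := Nat.cast_ne_zero.mpr (by omega)
  have hqA0 : 0 < qA := by rw [hqA]; linarith
  have hqA1 : qA < 1 := by rw [hqA]; linarith
  have hqB0 : 0 < qB := by rw [hqB]; linarith
  have hqB1 : qB < 1 := by rw [hqB]; linarith
  have hQpos : 0 < qA ^ r * qB ^ s := by positivity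
  have hQlt : qA ^ r * qB ^ s < 1 := by
    have h1 : qA ^ r ≤ 1 := pow_le_one₀ hqA0.le hqA1.le
    have h2 : qB ^ s < 1 := pow_lt_one₀ hqB0.le hqB1 (by omega)
    have h3 : 0 < qB ^ s := pow_pos hqB0 s
    nlinarith
  have hden : (0:ℝ) < 1 - (qA ^ r * qB ^ s) ^ 2 := by nlinarith
  have hAB : pA ≠ pB := by
    intro h
    have h1 : ((Finset.Icc 1 (r + s)).filter fun i => p i = pA) = Finset.Icc 1 (r + s) :=
      Finset.filter_true_of_mem fun i _ => (hval i).elim id (fun h' => h'.trans h.symm)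
    rw [h1, Nat.card_Icc] at hcardA
    omega
  have hfilterB : ((Finset.Icc 1 (r + s)).filter fun i => ¬ p i = pA)
      = ((Finset.Icc 1 (r + s)).filter fun i => p i = pB) := by
    apply Finset.filter_congr
    intro i _
    rcases hval i with h | h <;> simp [h, hAB, Ne.symm hAB]
  have hApart : ∏ i ∈ (Finset.Icc 1 (r+s)).filter (fun i => p i = pA), (1 - p i) = qA ^ r := by
    rw [Finset.prod_congr rfl (g := fun _ => qA) (fun i hi => by
      rw [(Finset.mem_filter.mp hi).2, hqA]), Finset.prod_const, hcardA]
  have hBpart : ∏ i ∈ (Finset.Icc 1 (r+s)).filter (fun i => p i = pB), (1 - p i) = qB ^ s := by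
    rw [Finset.prod_congr rfl (g := fun _ => qB) (fun i hi => by
      rw [(Finset.mem_filter.mp hi).2, hqB]), Finset.prod_const, hcardB]
  have hprodIcc : ∏ i ∈ Finset.Icc 1 (r + s), (1 - p i) = qA ^ r * qB ^ s := by
    rw [← Finset.prod_filter_mul_prod_filter_not (Finset.Icc 1 (r+s)) (fun i => p i = pA)
      (fun i => 1 - p i), hfilterB, hApart, hBpart]
  have hsumIcc : ∑ i ∈ Finset.Icc 1 (r + s), (1 - p i) = (r:ℝ) * qA + (s:ℝ) * qB := by
    rw [← Finset.sum_filter_add_sum_filter_not (Finset.Icc 1 (r+s)) (fun i => p i = pA)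
      (fun i => 1 - p i), hfilterB]
    rw [Finset.sum_congr rfl (g := fun _ => qA) (fun i hi => by
      rw [(Finset.mem_filter.mp hi).2, hqA]), Finset.sum_const, hcardA]
    rw [Finset.sum_congr rfl (g := fun _ => qB) (fun i hi => by
      rw [(Finset.mem_filter.mp hi).2, hqB]), Finset.sum_const, hcardB]
    simp [nsmul_eq_mul]
  have hWN0 : Wq p 0 (r+s) = qA ^ r * qB ^ s := by
    unfold Wq
    rw [zero_add, show Finset.Ioc 0 (r+s) = Finset.Icc 1 (r+s) by ext i; simp; omega]
    exact hprodIcc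
  have hgtop : gsum p (r+s) ((r+s)+1) = (qA^r*qB^s) * ((r:ℝ)*qA + (s:ℝ)*qB) := by
    rw [gsum_top p (r+s) hN1 hper, hWN0, hsumIcc]
  have hQ0eq : Q0 = ∑ m ∈ Finset.Icc 2 (r+s), (-1:ℝ)^m * gsum p (r+s) m := by
    rw [hQ0, Finset.sum_comm]
    refine Finset.sum_congr rfl fun k hk => ?_
    rw [← Finset.mul_sum]
    congr 1
    rw [← gsum_prev p (r+s) hN1 hper k]
    refine Finset.sum_congr rfl fun j hj => ?_
    have hj1 : 1 ≤ j := (Finset.mem_Icc.mp hj).1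
    have hk2 : 2 ≤ k := (Finset.mem_Icc.mp hk).1
    unfold Wq
    congr 1
    ext i
    simp only [Finset.mem_Icc, Finset.mem_Ioc]
    omega
  have hIocW : ∀ j m, (∏ i ∈ Finset.Icc (j+1) (j+m), (1 - p i)) = Wq p j m := by
    intro j m
    unfold Wq
    congr 1
    ext i
    simp only [Finset.mem_Icc, Finset.mem_Ioc]
    omega
  have hpC : pCircD p r s (1 - pA) (1 - pB)
      = (1 + (-1:ℝ)^(r+s) * (qA^r*qB^s)) *
          (Q0 + (-1:ℝ)^((r+s)+1) * ((qA^r*qB^s) * ((r:ℝ)*qA + (s:ℝ)*qB)))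
        / (((r+s:ℕ):ℝ) * (1 - (qA^r*qB^s)^2)) := by
    unfold pCircD
    rw [← hqA, ← hqB]
    simp only [hIocW]
    rw [← Finset.sum_div, main_sum p (r+s) hN2 hper, hWN0, hgtop, ← hQ0eq]
    field_simp
  have hpoA : poArm pA = qA^2 / (1+qA) := by
    unfold poArm
    rw [← hqA]
    have h1 : (1:ℝ) - qA^2 ≠ 0 := by nlinarith
    have h2 : (1:ℝ) + qA ≠ 0 := by linarith
    field_simp
    rw [hqA]
    ring
  have hpoB : poArm pB = qB^2 / (1+qB) := by
    unfold poArm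
    rw [← hqB]
    have h1 : (1:ℝ) - qB^2 ≠ 0 := by nlinarith
    have h2 : (1:ℝ) + qB ≠ 0 := by linarith
    field_simp
    rw [hqB]
    ring
  unfold RD
  rw [hpoA, hpoB, hpC, hR0, hS0]
  rw [pow_succ qA r, pow_succ qB s, pow_succ (-1:ℝ) (r+s)]
  have h1A : (1:ℝ) + qA ≠ 0 := by linarith
  have h1B : (1:ℝ) + qB ≠ 0 := by linarith
  have hden' : (1:ℝ) - (qA ^ r * qB ^ s) ^ 2 ≠ 0 := ne_of_gt hden
  field_simp
  ring
end

section
/- (Lemma 4.) Let r, s ≥ 1 and let D = A^r B^s be the strategy with p_i = p_A for 1 ≤ i ≤ r and p_i = p_B for r+1 ≤ i ≤ r+s. Then R_D = 2 Q_1 S, where Q_1 = (1 − (−1)^r q_A^r)(1 − (−1)^s q_B^s) and S = (q_A − q_B)²(1 + (−1)^{r+s} q_A^r q_B^s) / ((r+s)(1+q_A)²(1+q_B)²(1 − (q_A^r q_B^s)²)). -/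
open Finset

/-- `S = (q_A − q_B)²(1 + (−1)^{r+s} q_A^r q_B^s) /
      ((r+s)(1+q_A)²(1+q_B)²(1 − (q_A^r q_B^s)²))`. -/
noncomputable def Sval (qA qB : ℝ) (r s : ℕ) : ℝ :=
  (qA - qB) ^ 2 * (1 + (-1 : ℝ) ^ (r + s) * qA ^ r * qB ^ s) /
    (((r + s : ℕ) : ℝ) * (1 + qA) ^ 2 * (1 + qB) ^ 2 * (1 - (qA ^ r * qB ^ s) ^ 2))

/-!
Write `X_j(m) = q_j q_{j+1} ⋯ q_{j+m-1}` (`runProd`), `n = r + s` and `Q = q_A^r q_B^s = X_j(n)`.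
Since `p_j X_{j+1}(m) = X_{j+1}(m) - X_j(m+1)`, periodicity telescopes the numerator of `p°_D`
into `Σ_j V_j - (1 - Q²) Σ_j p_j`, where `V_j = Σ_{m<2n} (-1)^m X_j(m)` (`altRunSum`). These
alternating sums satisfy the affine recurrence `V_j + q_j V_{j+1} = 1 - Q²`, whose coefficient is
constant on each block of the pattern; solving it on the two blocks gives `Σ_j V_j` in closed
form, and the rest is algebra.
-/

open Function

namespace Function.Periodic

variable {M : Type*} [CommMonoid M] {f : ℕ → M}

@[to_additive]
theorem prod_range_comp_add {n : ℕ} (hf : Periodic f n) (a : ℕ) :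
    ∏ i ∈ range n, f (a + i) = ∏ i ∈ range n, f i := by
  induction a with
  | zero => simp
  | succ a ih =>
    rw [← ih]
    rcases n with _ | m
    · simp
    have h : f (a + 1 + m) = f a := by rw [add_right_comm]; exact hf a
    rw [prod_range_succ, prod_range_succ', add_zero, h]
    simp only [add_assoc, add_comm 1]

@[to_additive]
theorem prod_Icc_eq_prod_range {n : ℕ} (hf : Periodic f n) :
    ∏ i ∈ Icc 1 n, f i = ∏ i ∈ range n, f i := by
  rw [← Ico_add_one_right_eq_Icc, prod_Ico_eq_prod_range, Nat.add_sub_cancel,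
    hf.prod_range_comp_add]

@[to_additive]
theorem prod_range_eq_pow_mul_pow {r s : ℕ} {a b : M} (hf : Periodic f (r + s))
    (ha : ∀ i < r, f (1 + i) = a) (hb : ∀ i < s, f (1 + r + i) = b) :
    ∏ i ∈ range (r + s), f i = a ^ r * b ^ s := by
  have hA : ∏ i ∈ range r, f (1 + i) = a ^ r := by
    rw [prod_congr rfl fun i hi => ha i (mem_range.1 hi), prod_const, card_range]
  have hB : ∏ i ∈ range s, f (1 + (r + i)) = b ^ s := by
    rw [prod_congr rfl fun i hi => add_assoc 1 r i ▸ hb i (mem_range.1 hi), prod_const,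
      card_range]
  rw [← hf.prod_range_comp_add 1, prod_range_add, hA, hB]

end Function.Periodic

section RunProduct

variable {R : Type*} [CommRing R] (q : ℕ → R)

def runProd (j m : ℕ) : R := ∏ i ∈ range m, q (j + i)

def altRunSum (N j : ℕ) : R := ∑ k ∈ range N, (runProd q j (2 * k) - runProd q j (2 * k + 1))

variable {q}

@[simp]
theorem runProd_zero (j : ℕ) : runProd q j 0 = 1 := prod_range_zero _

theorem runProd_succ (j m : ℕ) : runProd q j (m + 1) = q j * runProd q (j + 1) m := by
  simp only [runProd, prod_range_succ', add_zero, add_assoc, add_comm 1, mul_comm]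

@[simp]
theorem runProd_one (j : ℕ) : runProd q j 1 = q j := by simp [runProd_succ]

theorem runProd_add (j m l : ℕ) : runProd q j (m + l) = runProd q j m * runProd q (j + m) l := by
  simp only [runProd, prod_range_add, add_assoc]

theorem prod_Icc_eq_runProd (j m : ℕ) :
    ∏ i ∈ Icc (j + 1) (j + m), q i = runProd q (j + 1) m := by
  rw [runProd, ← Ico_add_one_right_eq_Icc, prod_Ico_eq_prod_range, add_right_comm,
    Nat.add_sub_cancel_left]

theorem altRunSum_add_mul_altRunSum_succ (N j : ℕ) :
    altRunSum q N j + q j * altRunSum q N (j + 1) = 1 - runProd q j (2 * N) := by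
  have hOdd (i : ℕ) : ∑ k ∈ range N, runProd q i (2 * k + 1)
      = q i * ∑ k ∈ range N, runProd q (i + 1) (2 * k) := by
    simp only [runProd_succ, mul_sum]
  have hEven : ∑ k ∈ range N, runProd q j (2 * k) + runProd q j (2 * N)
      = 1 + q j * ∑ k ∈ range N, runProd q (j + 1) (2 * k + 1) := by
    rw [← sum_range_succ, sum_range_succ', add_comm]
    simp only [mul_zero, runProd_zero, mul_add, mul_one, runProd_succ, mul_sum]
  simp only [altRunSum, sum_sub_distrib, hOdd j]
  linear_combination hEven

theorem sum_Icc_runProd_sub (N j : ℕ) :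
    ∑ k ∈ Icc 1 N, (runProd q j (2 * k) - runProd q j (2 * k + 1))
      = altRunSum q N j - (1 - q j) + runProd q j (2 * N) * (1 - q (j + 2 * N)) := by
  have h := sum_range_succ' (fun k => runProd q j (2 * k) - runProd q j (2 * k + 1)) N
  rw [sum_range_succ, runProd_add j (2 * N) 1, runProd_one] at h
  rw [← Ico_add_one_right_eq_Icc, sum_Ico_eq_sum_range, Nat.add_sub_cancel, altRunSum]
  simp only [add_comm 1, mul_zero, zero_add, runProd_zero, runProd_one] at h ⊢
  linear_combination -h

variable {n : ℕ}

theorem periodic_runProd (hq : Periodic q n) (m : ℕ) : Periodic (fun j => runProd q j m) n :=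
  fun j => by simp only [runProd, add_right_comm j n, hq _]

theorem runProd_period (hq : Periodic q n) (j : ℕ) : runProd q j n = runProd q 0 n := by
  simpa only [runProd, zero_add] using hq.prod_range_comp_add j

theorem runProd_two_mul_period (hq : Periodic q n) (j : ℕ) :
    runProd q j (2 * n) = runProd q 0 n ^ 2 := by
  rw [two_mul, runProd_add, runProd_period hq j, runProd_period hq (j + n), sq]

theorem altRunSum_add_mul_altRunSum_succ_of_periodic (hq : Periodic q n) (j : ℕ) :
    altRunSum q n j + q j * altRunSum q n (j + 1) = 1 - runProd q 0 n ^ 2 := by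
  rw [altRunSum_add_mul_altRunSum_succ, runProd_two_mul_period hq]

theorem sum_one_sub_mul_runProd_of_periodic (hq : Periodic q n) (m : ℕ) :
    ∑ j ∈ Icc 1 n, (1 - q j) * runProd q (j + 1) m
      = ∑ j ∈ range n, (runProd q j m - runProd q j (m + 1)) := by
  have hsplit (j : ℕ) : (1 - q j) * runProd q (j + 1) m
      = runProd q (j + 1) m - runProd q j (m + 1) := by
    rw [runProd_succ]; ring
  have hper : Periodic (fun j => runProd q (j + 1) m - runProd q j (m + 1)) n := fun j => by
    simp only [add_right_comm j n 1, periodic_runProd hq _ _]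
  simp only [hsplit]
  rw [Periodic.sum_Icc_eq_sum_range hper, sum_sub_distrib, sum_sub_distrib]
  simp only [add_comm _ 1, (periodic_runProd hq m).sum_range_comp_add 1]

theorem sum_Icc_sum_Icc_one_sub_mul_prod_Icc (hq : Periodic q n) :
    ∑ k ∈ Icc 1 n, ∑ j ∈ Icc 1 n, (1 - q j) * ∏ i ∈ Icc (j + 1) (j + 2 * k), q i
      = ∑ j ∈ range n, altRunSum q n j
        - (1 - runProd q 0 n ^ 2) * ∑ j ∈ range n, (1 - q j) := by
  simp only [prod_Icc_eq_runProd, sum_one_sub_mul_runProd_of_periodic hq]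
  rw [sum_comm, mul_sum, ← sum_sub_distrib]
  refine sum_congr rfl fun j _ => ?_
  have hq2 : q (j + 2 * n) = q j := by rw [two_mul, ← add_assoc, hq, hq]
  rw [sum_Icc_runProd_sub, runProd_two_mul_period hq, hq2]
  ring

theorem periodic_altRunSum (hq : Periodic q n) (N : ℕ) : Periodic (altRunSum q N) n :=
  fun j => by simp only [altRunSum, periodic_runProd hq _ j]

end RunProduct

section AffineRecurrence

variable {R : Type*} [CommRing R] {v : ℕ → R} {x c : R} {t L : ℕ}

theorem one_add_mul_sum_range_eq_of_add_mul_succ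
    (h : ∀ i < L, v (t + i) + x * v (t + i + 1) = c) :
    (1 + x) * ∑ i ∈ range L, v (t + i) = L * c + x * (v t - v (t + L)) := by
  induction L with
  | zero => simp
  | succ L ih =>
    rw [sum_range_succ, mul_add, ih fun i hi => h i (by omega)]
    push_cast
    linear_combination h L (by omega)

theorem one_add_mul_sub_eq_neg_pow_mul_of_add_mul_succ
    (h : ∀ i < L, v (t + i) + x * v (t + i + 1) = c) :
    (1 + x) * v t - c = (-x) ^ L * ((1 + x) * v (t + L) - c) := by
  induction L with
  | zero => simp
  | succ L ih =>
    rw [ih fun i hi => h i (by omega), pow_succ]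
    linear_combination (-x) ^ L * (1 + x) * h L (by omega)

theorem mul_sum_range_eq_of_two_blocks {y : R} {r s : ℕ}
    (hx : ∀ i < r, v (t + i) + x * v (t + i + 1) = c)
    (hy : ∀ i < s, v (t + r + i) + y * v (t + r + i + 1) = c)
    (hv : v (t + (r + s)) = v t) :
    (1 + x) ^ 2 * (1 + y) ^ 2 * (1 - (-x) ^ r * (-y) ^ s) * ∑ i ∈ range (r + s), v (t + i)
      = c * ((1 + x) * (1 + y) * (1 - (-x) ^ r * (-y) ^ s) * (r * (1 + y) + s * (1 + x))
        - (1 - (-x) ^ r) * (1 - (-y) ^ s) * (x - y) ^ 2) := by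
  have hsx := one_add_mul_sum_range_eq_of_add_mul_succ hx
  have hsy := one_add_mul_sum_range_eq_of_add_mul_succ hy
  have hvx := one_add_mul_sub_eq_neg_pow_mul_of_add_mul_succ hx
  have hvy := one_add_mul_sub_eq_neg_pow_mul_of_add_mul_succ hy
  rw [← add_assoc] at hv
  rw [hv] at hsy hvy
  rw [sum_range_add]
  simp only [← add_assoc]
  linear_combination (1 + x) * (1 + y) ^ 2 * (1 - (-x) ^ r * (-y) ^ s) * hsx
    + (1 + x) ^ 2 * (1 + y) * (1 - (-x) ^ r * (-y) ^ s) * hsy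
    + (x - y) * ((1 + y) * (1 - (-y) ^ s) * hvx - (1 + x) * (1 - (-x) ^ r) * hvy)

end AffineRecurrence

theorem sq_neg_pow_mul_neg_pow {R : Type*} [CommRing R] (x y : R) (r s : ℕ) :
    ((-x) ^ r * (-y) ^ s) ^ 2 = (x ^ r * y ^ s) ^ 2 := by
  simp only [mul_pow, ← pow_mul, Even.neg_pow (Nat.even_mul.2 (Or.inr even_two))]

section TwoBlocks

variable {R : Type*} [CommRing R] {q : ℕ → R} {x y : R} {r s : ℕ}

theorem runProd_zero_of_two_blocks (hq : Periodic q (r + s)) (hx : ∀ i < r, q (1 + i) = x)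
    (hy : ∀ i < s, q (1 + r + i) = y) : runProd q 0 (r + s) = x ^ r * y ^ s := by
  simpa only [runProd, zero_add] using hq.prod_range_eq_pow_mul_pow hx hy

theorem sum_altRunSum_of_two_blocks (hq : Periodic q (r + s)) (hx : ∀ i < r, q (1 + i) = x)
    (hy : ∀ i < s, q (1 + r + i) = y) :
    (1 + x) ^ 2 * (1 + y) ^ 2 * (1 - (-x) ^ r * (-y) ^ s) *
        ∑ i ∈ range (r + s), altRunSum q (r + s) i
      = (1 - ((-x) ^ r * (-y) ^ s) ^ 2) *
        ((1 + x) * (1 + y) * (1 - (-x) ^ r * (-y) ^ s) * (r * (1 + y) + s * (1 + x))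
          - (1 - (-x) ^ r) * (1 - (-y) ^ s) * (x - y) ^ 2) := by
  rw [sq_neg_pow_mul_neg_pow, ← runProd_zero_of_two_blocks hq hx hy,
    ← (periodic_altRunSum hq _).sum_range_comp_add 1]
  exact mul_sum_range_eq_of_two_blocks
    (fun i hi => by rw [← hx i hi]; exact altRunSum_add_mul_altRunSum_succ_of_periodic hq _)
    (fun i hi => by rw [← hy i hi]; exact altRunSum_add_mul_altRunSum_succ_of_periodic hq _)
    (periodic_altRunSum hq _ 1)

end TwoBlocks

theorem abs_neg_pow_mul_neg_pow_lt_one {R : Type*} [Ring R] [LinearOrder R]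
    [IsStrictOrderedRing R] {x y : R} {r s : ℕ} (hx0 : 0 ≤ x) (hx1 : x < 1) (hy0 : 0 ≤ y)
    (hy1 : y ≤ 1) (hr : r ≠ 0) :
    |(-x) ^ r * (-y) ^ s| < 1 := by
  rw [abs_mul, abs_pow, abs_pow, abs_neg, abs_neg, abs_of_nonneg hx0, abs_of_nonneg hy0]
  exact mul_lt_one_of_nonneg_of_lt_one_left (pow_nonneg hx0 _) (pow_lt_one₀ hx0 hx1 hr)
    (pow_le_one₀ hy0 hy1)

theorem poArm_eq {x : ℝ} (hx : x ≠ 0) : poArm x = (1 - x) ^ 2 / (1 + (1 - x)) := by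
  rw [poArm, show 1 - (1 - x) ^ 2 = x * (1 + (1 - x)) by ring, mul_div_mul_left _ _ hx]

theorem profit_eq_of_mul_sum_eq {K : Type*} [Field K] {x y A B T : K} {r s : ℕ}
    (hn : (r + s : K) ≠ 0) (hx : 1 + x ≠ 0) (hy : 1 + y ≠ 0) (hAB : 1 - A * B ≠ 0)
    (hAB' : 1 + A * B ≠ 0)
    (hT : (1 + x) ^ 2 * (1 + y) ^ 2 * (1 - A * B) * T
      = (1 - (A * B) ^ 2) * ((1 + x) * (1 + y) * (1 - A * B) * (r * (1 + y) + s * (1 + x))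
        - (1 - A) * (1 - B) * (x - y) ^ 2)) :
    2 * (r * (x ^ 2 / (1 + x)) + s * (y ^ 2 / (1 + y))) / (r + s)
      - 2 * (1 / (r + s) *
        ((T - (1 - (A * B) ^ 2) * (r * (1 - x) + s * (1 - y))) / (1 - (A * B) ^ 2)))
      = 2 * ((1 - A) * (1 - B)) * ((x - y) ^ 2 * (1 + A * B) /
        ((r + s) * (1 + x) ^ 2 * (1 + y) ^ 2 * (1 - (A * B) ^ 2))) := by
  have hT' : T = (1 + A * B) * ((1 + x) * (1 + y) * (1 - A * B) * (r * (1 + y) + s * (1 + x))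
      - (1 - A) * (1 - B) * (x - y) ^ 2) / ((1 + x) ^ 2 * (1 + y) ^ 2) := by
    rw [eq_div_iff (by positivity)]
    apply mul_left_cancel₀ hAB
    linear_combination hT
  have hsq : 1 - (A * B) ^ 2 = (1 - A * B) * (1 + A * B) := by ring
  rw [hT', hsq]
  field_simp
  ring

theorem lemma4_RD_simple_strategy_general
    (pA pB qA qB : ℝ) (hpA : pA ∈ Set.Ioo (0 : ℝ) 1) (hpB : pB ∈ Set.Ioo (0 : ℝ) 1)
    (hqA : qA = 1 - pA) (hqB : qB = 1 - pB)
    (r s : ℕ) (hr : 1 ≤ r)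
    (p : ℕ → ℝ)
    (hper : ∀ i, p (i + (r + s)) = p i)
    (hA : ∀ i, 1 ≤ i → i ≤ r → p i = pA)
    (hB : ∀ i, r + 1 ≤ i → i ≤ r + s → p i = pB) :
    RD p r s pA pB
      = 2 * ((1 - (-1 : ℝ) ^ r * qA ^ r) * (1 - (-1 : ℝ) ^ s * qB ^ s)) * Sval qA qB r s := by
  obtain ⟨hpA0, hpA1⟩ := hpA
  obtain ⟨hpB0, hpB1⟩ := hpB
  have hq : Periodic (1 - p) (r + s) := fun i => by simp only [Pi.sub_apply, Pi.one_apply, hper]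
  have hqA' (i : ℕ) (hi : i < r) : (1 - p) (1 + i) = qA := by
    rw [hqA, Pi.sub_apply, hA (1 + i) (by omega) (by omega), Pi.one_apply]
  have hqB' (i : ℕ) (hi : i < s) : (1 - p) (1 + r + i) = qB := by
    rw [hqB, Pi.sub_apply, hB (1 + r + i) (by omega) (by omega), Pi.one_apply]
  have hnum := sum_Icc_sum_Icc_one_sub_mul_prod_Icc hq
  simp only [Pi.sub_apply, Pi.one_apply, sub_sub_cancel] at hnum
  have hpsum : ∑ i ∈ range (r + s), p i = r * (1 - qA) + s * (1 - qB) := by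
    rw [hqA, hqB, sub_sub_cancel, sub_sub_cancel]
    simpa using Periodic.sum_range_eq_nsmul_add_nsmul hper
      (fun i hi => hA (1 + i) (by omega) (by omega)) (fun i hi => hB _ (by omega) (by omega))
  have hsign : (-1) ^ (r + s) * qA ^ r * qB ^ s = (-qA) ^ r * (-qB) ^ s := by
    rw [neg_pow qA, neg_pow qB, pow_add]; ring
  obtain ⟨hAB0, hAB1⟩ := abs_lt.1 <| abs_neg_pow_mul_neg_pow_lt_one (x := qA) (y := qB) (s := s)
    (by linarith) (by linarith) (by linarith) (by linarith) (by omega : r ≠ 0)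
  rw [RD, pCircD, ← sum_div, hnum, hpsum, runProd_zero_of_two_blocks hq hqA' hqB',
    poArm_eq hpA0.ne', poArm_eq hpB0.ne', Sval, ← neg_pow, ← neg_pow, ← hqA, ← hqB, hsign,
    ← sq_neg_pow_mul_neg_pow]
  push_cast
  exact profit_eq_of_mul_sum_eq (by positivity) (by linarith) (by linarith) (by linarith)
    (by linarith) (sum_altRunSum_of_two_blocks hq hqA' hqB')

/-- Lemma 4: for the strategy `D = A^r B^s`, `R_D = 2 Q_1 S` where
`Q_1 = (1 − (−1)^r q_A^r)(1 − (−1)^s q_B^s)`. -/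
theorem lemma4_RD_simple_strategy
    (pA pB qA qB : ℝ) (hpA : pA ∈ Set.Ioo (0 : ℝ) 1) (hpB : pB ∈ Set.Ioo (0 : ℝ) 1)
    (hqA : qA = 1 - pA) (hqB : qB = 1 - pB)
    (r s : ℕ) (hr : 1 ≤ r) (hs : 1 ≤ s)
    (p : ℕ → ℝ)
    (hper : ∀ i, p (i + (r + s)) = p i)
    (hA : ∀ i, 1 ≤ i → i ≤ r → p i = pA)
    (hB : ∀ i, r + 1 ≤ i → i ≤ r + s → p i = pB) :
    RD p r s pA pB
      = 2 * ((1 - (-1 : ℝ) ^ r * qA ^ r) * (1 - (-1 : ℝ) ^ s * qB ^ s)) * Sval qA qB r s :=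
  lemma4_RD_simple_strategy_general pA pB qA qB hpA hpB hqA hqB r s hr p hper hA hB
end

section
/- (Lemma 5.) Let h ≥ 2 and let D = A^{r_1}B^{s_1}⋯A^{r_{h−1}}B^{s_{h−1}}A^{r_h}B^{s_h} and D' = A^{r_1}B^{s_1}⋯A^{r_{h−1}}A^{r_h}B^{s_{h−1}}B^{s_h}, where r_k, s_k ≥ 1 for 1 ≤ k ≤ h, Σ_k r_k = r, Σ_k s_k = s. Then R_D − R_{D'} = 2 S (1 − b_{2h−2})(1 − b_{2h−1}) · Σ_{j=0}^{2h−3} (−1)^j ( Π_{i=0}^{j−1} b_i + Π_{i=j}^{2h−3} b_i ), where the b_i are built from D. -/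
open Finset

/-!
Write `z i = p (i + 1) - 1 = -q_{i+1}` and let `P` be the product of `z` over a period. Summing
the geometric series over full periods, `p°_D = Σ_j (W_j - z_j) / (r + s)`, where `W` is the
periodic solution of `W j = z j * (1 + W (j + 1))`. On a run of a constant value `ζ`, with
`ℓ = ζ / (1 - ζ)` the fixed point of this recurrence, `W - ℓ` gets multiplied by `ζ` at each step,
and `Σ (W - z)` over the run is `length * (ℓ - ζ) + ℓ * (increment of W)`. So `R_D` only depends
on the values of `W` at the block boundaries, which obey `s - ℓ = b * (t - ℓ)` around the cycle of
blocks. The strategies `D` and `D'` share the path of blocks `2h, 1, …, 2h-3` and close it with the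
blocks `2h-2, 2h-1` in opposite orders. Solving the two closing equations and comparing the two
paths by an alternating telescoping sum gives the difference, with
`S = (ℓ_A - ℓ_B)² / ((r + s)(1 - P))`.
-/

open Function

namespace Lemma5

section

variable {M : Type*} [CommMonoid M]

@[to_additive]
theorem prod_range_shift_of_periodic {f : ℕ → M} {n : ℕ} (hf : Periodic f n) :
    ∏ j ∈ range n, f (j + 1) = ∏ j ∈ range n, f j := by
  cases n with
  | zero => rfl
  | succ k =>
    rw [prod_range_succ, prod_range_succ' f, show f (k + 1) = f 0 by simpa using hf 0]

theorem prod_window_of_periodic {f : ℕ → M} {n : ℕ} (hf : Periodic f n) (j : ℕ) :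
    ∏ i ∈ range n, f (j + i) = ∏ i ∈ range n, f i := by
  induction j with
  | zero => simp
  | succ j ih =>
    rw [← ih, ← prod_range_shift_of_periodic (f := fun i => f (j + i)) fun i => by
      simpa [add_assoc] using hf (j + i)]
    simp only [add_assoc, add_comm 1]

@[to_additive]
theorem prod_range_even_odd (f : ℕ → M) (n : ℕ) :
    ∏ i ∈ range (2 * n), f i = ∏ k ∈ range n, (f (2 * k) * f (2 * k + 1)) := by
  induction n with
  | zero => simp
  | succ n ih =>
    rw [mul_add_one, prod_range_succ, prod_range_succ, ih, prod_range_succ, mul_assoc]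

@[to_additive]
theorem prod_Ico_eq_prod_blocks (f : ℕ → M) {e : ℕ → ℕ} (he : Monotone e) (T : ℕ) :
    ∏ i ∈ Ico (e 0) (e T), f i = ∏ t ∈ range T, ∏ i ∈ Ico (e t) (e (t + 1)), f i := by
  induction T with
  | zero => simp
  | succ T ih =>
    rw [prod_range_succ, ← ih, prod_Ico_consecutive _ (he (Nat.zero_le T)) (he T.le_succ)]

end

theorem sum_Icc_eq_sum_range_succ {N : Type*} [AddCommMonoid N] (f : ℕ → N) (n : ℕ) :
    ∑ i ∈ Icc 1 n, f i = ∑ i ∈ range n, f (i + 1) := by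
  rw [← Ico_add_one_right_eq_Icc, sum_Ico_eq_sum_range, Nat.add_sub_cancel]
  simp only [add_comm 1]

section Windows

variable {z : ℕ → ℝ} {n : ℕ}

theorem periodic_shift_sub_one {p : ℕ → ℝ} (hp : Periodic p n) :
    Periodic (fun i => p (i + 1) - 1) n :=
  fun i => by simp only [add_right_comm i n 1, hp (i + 1)]

def windowSum (z : ℕ → ℝ) (n m : ℕ) : ℝ := ∑ j ∈ range n, ∏ i ∈ range m, z (j + i)

theorem periodic_prod_window (hz : Periodic z n) (m : ℕ) :
    Periodic (fun j => ∏ i ∈ range m, z (j + i)) n :=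
  fun j => prod_congr rfl fun i _ => by rw [add_right_comm, hz]

theorem windowSum_add_period (hz : Periodic z n) (m : ℕ) :
    windowSum z n (m + n) = (∏ i ∈ range n, z i) * windowSum z n m := by
  simp only [windowSum, mul_sum, prod_range_add, ← add_assoc, prod_window_of_periodic hz,
    mul_comm]

/-- The windows of even length in `p°_D`: with `z i = p (i + 1) - 1 = -q_{i+1}`, the product
`p_j q_{j+1} ⋯ q_{j+2k}` is `(1 + z_{j-1}) z_j ⋯ z_{j+2k-1}`. -/
theorem sum_Icc_mul_prod_one_sub {p : ℕ → ℝ} (hp : Periodic p n) (k : ℕ) :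
    ∑ j ∈ Icc 1 n, p j * ∏ i ∈ Icc (j + 1) (j + 2 * k), (1 - p i) =
      windowSum (fun i => p (i + 1) - 1) n (2 * k) +
        windowSum (fun i => p (i + 1) - 1) n (2 * k + 1) := by
  have hz := periodic_shift_sub_one hp
  set z : ℕ → ℝ := fun i => p (i + 1) - 1
  have hneg (j : ℕ) :
      ∏ i ∈ Icc (j + 1 + 1) (j + 1 + 2 * k), (1 - p i) = ∏ i ∈ range (2 * k), z (j + 1 + i) := by
    rw [← Ico_add_one_right_eq_Icc, prod_Ico_eq_prod_range,
      show j + 1 + 2 * k + 1 - (j + 1 + 1) = 2 * k by omega]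
    calc ∏ i ∈ range (2 * k), (1 - p (j + 1 + 1 + i))
        = ∏ i ∈ range (2 * k), -z (j + 1 + i) :=
          prod_congr rfl fun i _ => by rw [show j + 1 + 1 + i = j + 1 + i + 1 by ring]; ring
      _ = ∏ i ∈ range (2 * k), z (j + 1 + i) := by
          rw [prod_neg, card_range, pow_mul, neg_one_sq, one_pow, one_mul]
  have hsucc (j : ℕ) :
      ∏ i ∈ range (2 * k + 1), z (j + i) = z j * ∏ i ∈ range (2 * k), z (j + 1 + i) := by
    rw [prod_range_succ', mul_comm]
    simp only [add_zero, add_assoc, add_comm 1]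
  have hshift := sum_range_shift_of_periodic (periodic_prod_window hz (2 * k))
  rw [sum_Icc_eq_sum_range_succ, windowSum, windowSum, ← hshift, ← sum_add_distrib]
  refine sum_congr rfl fun j _ => ?_
  rw [hneg, hsucc, show p (j + 1) = 1 + z j by simp only [z]; ring]
  ring

theorem sum_Icc_windowSum_pairs (hz : Periodic z n) :
    ∑ k ∈ Icc 1 n, (windowSum z n (2 * k) + windowSum z n (2 * k + 1)) =
      (1 + ∏ i ∈ range n, z i) * ∑ m ∈ range n, windowSum z n (m + 2) := by
  calc ∑ k ∈ Icc 1 n, (windowSum z n (2 * k) + windowSum z n (2 * k + 1))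
      = ∑ m ∈ range (2 * n), windowSum z n (m + 2) := by
        rw [sum_Icc_eq_sum_range_succ, sum_range_even_odd]
        exact sum_congr rfl fun k _ => by ring_nf
    _ = ∑ m ∈ range n, windowSum z n (m + 2) + ∑ m ∈ range n, windowSum z n (m + 2 + n) := by
        rw [two_mul, sum_range_add]
        exact congrArg _ (sum_congr rfl fun m _ => by ring_nf)
    _ = (1 + ∏ i ∈ range n, z i) * ∑ m ∈ range n, windowSum z n (m + 2) := by
        simp only [windowSum_add_period hz, ← mul_sum]
        ring

theorem sum_range_windowSum_add_two (hz : Periodic z n) :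
    ∑ m ∈ range n, windowSum z n (m + 2) =
      ∑ m ∈ range n, windowSum z n (m + 1) - (1 - ∏ i ∈ range n, z i) * windowSum z n 1 := by
  have h := (sum_range_succ (fun m => windowSum z n (m + 1)) n).symm.trans
    (sum_range_succ' (fun m => windowSum z n (m + 1)) n)
  rw [add_comm n 1, windowSum_add_period hz] at h
  linarith

end Windows

/-- For `n`-periodic `z` and `P = z_0 ⋯ z_{n-1}`, the series `Σ_{m ≥ 1} z_j ⋯ z_{j+m-1}`
summed in closed form over the periods. -/
noncomputable def tailSum (z : ℕ → ℝ) (n j : ℕ) : ℝ :=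
  (∑ m ∈ range n, ∏ i ∈ range (m + 1), z (j + i)) / (1 - ∏ i ∈ range n, z i)

theorem pCircD_eq {p : ℕ → ℝ} {r s : ℕ} {qA qB : ℝ} (hp : Periodic p (r + s))
    (hQ : (qA ^ r * qB ^ s) ^ 2 = (∏ i ∈ range (r + s), (p (i + 1) - 1)) ^ 2)
    (hP₁ : ∏ i ∈ range (r + s), (p (i + 1) - 1) ≠ 1)
    (hP₂ : ∏ i ∈ range (r + s), (p (i + 1) - 1) ≠ -1) :
    pCircD p r s qA qB = (∑ j ∈ range (r + s), tailSum (fun i => p (i + 1) - 1) (r + s) j -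
      ∑ j ∈ range (r + s), (p (j + 1) - 1)) / (r + s : ℕ) := by
  have hz := periodic_shift_sub_one hp
  unfold pCircD
  rw [← sum_div]
  simp only [sum_Icc_mul_prod_one_sub hp, sum_Icc_windowSum_pairs hz,
    sum_range_windowSum_add_two hz]
  set z : ℕ → ℝ := fun i => p (i + 1) - 1
  set P := ∏ i ∈ range (r + s), z i
  have hsum : ∑ j ∈ range (r + s), tailSum z (r + s) j =
      (∑ m ∈ range (r + s), windowSum z (r + s) (m + 1)) / (1 - P) := by
    simp only [tailSum, windowSum, ← sum_div]
    rw [sum_comm]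
  have hT1 : windowSum z (r + s) 1 = ∑ j ∈ range (r + s), z j := by simp [windowSum]
  have h1 : 1 - P ≠ 0 := sub_ne_zero.mpr (Ne.symm hP₁)
  have h2 : 1 + P ≠ 0 := fun h => hP₂ (by linarith)
  have h3 : 1 - P ^ 2 ≠ 0 := by
    rw [show 1 - P ^ 2 = (1 - P) * (1 + P) by ring]
    exact mul_ne_zero h1 h2
  rw [hsum, hQ, ← hT1]
  rcases eq_or_ne ((r + s : ℕ) : ℝ) 0 with hn | hn
  · simp [hn]
  · field_simp
    ring

section TailSum

variable {z : ℕ → ℝ} {n : ℕ}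

theorem tailSum_eq (hz : Periodic z n) (hP : ∏ i ∈ range n, z i ≠ 1) (j : ℕ) :
    tailSum z n j = z j * (1 + tailSum z n (j + 1)) := by
  have hP' : 1 - ∏ i ∈ range n, z i ≠ 0 := sub_ne_zero.mpr (Ne.symm hP)
  have hsplit := (sum_range_succ (fun m => ∏ i ∈ range m, z (j + 1 + i)) n).symm.trans
    (sum_range_succ' (fun m => ∏ i ∈ range m, z (j + 1 + i)) n)
  rw [prod_window_of_periodic hz, prod_range_zero] at hsplit
  have hhead : ∑ m ∈ range n, ∏ i ∈ range (m + 1), z (j + i) =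
      z j * ∑ m ∈ range n, ∏ i ∈ range m, z (j + 1 + i) := by
    simp only [prod_range_succ', add_zero, ← sum_mul, mul_comm (z j), add_assoc, add_comm 1]
  unfold tailSum
  rw [hhead, eq_sub_of_add_eq hsplit]
  field_simp
  ring

theorem periodic_tailSum (hz : Periodic z n) : Periodic (tailSum z n) n := fun j => by
  unfold tailSum
  congr 1
  exact sum_congr rfl fun m _ => periodic_prod_window hz (m + 1) j

end TailSum

section Runs

variable {z W : ℕ → ℝ} {ζ ℓ : ℝ} {u v : ℕ}

theorem run_prod (hrun : ∀ i ∈ Ico u v, z i = ζ) : ∏ i ∈ Ico u v, z i = ζ ^ (v - u) := by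
  rw [prod_congr rfl hrun, prod_const, Nat.card_Ico]

theorem run_transfer (hW : ∀ i, W i = z i * (1 + W (i + 1))) (hℓ : ℓ = ζ * (1 + ℓ))
    (huv : u ≤ v) (hrun : ∀ i ∈ Ico u v, z i = ζ) : W u - ℓ = ζ ^ (v - u) * (W v - ℓ) := by
  induction v, huv using Nat.le_induction with
  | base => simp
  | succ v huv ih =>
    have hv : z v = ζ := hrun v (mem_Ico.mpr ⟨huv, v.lt_succ_self⟩)
    rw [ih fun i hi => hrun i (Ico_subset_Ico_right v.le_succ hi), Nat.sub_add_comm huv,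
      pow_succ, hW v, hv]
    linear_combination (-ζ ^ (v - u)) * hℓ

theorem run_sum (hW : ∀ i, W i = z i * (1 + W (i + 1))) (hℓ : ℓ = ζ * (1 + ℓ))
    (huv : u ≤ v) (hrun : ∀ i ∈ Ico u v, z i = ζ) :
    ∑ i ∈ Ico u v, (W i - z i) = (v - u : ℕ) * (ℓ - ζ) + ℓ * (W v - W u) := by
  induction v, huv using Nat.le_induction with
  | base => simp
  | succ v huv ih =>
    have hv : z v = ζ := hrun v (mem_Ico.mpr ⟨huv, v.lt_succ_self⟩)
    rw [sum_Ico_succ_top huv, ih fun i hi => hrun i (Ico_subset_Ico_right v.le_succ hi),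
      Nat.sub_add_comm huv, hW v, hv]
    push_cast
    linear_combination (-1 - W (v + 1)) * hℓ

end Runs

def alternate (x y : ℝ) (j : ℕ) : ℝ := if j % 2 = 1 then x else y

theorem alternate_zero (x y : ℝ) : alternate x y 0 = y := rfl

theorem alternate_sub_one (x y : ℝ) (t : ℕ) :
    alternate x y t - 1 = alternate (x - 1) (y - 1) t := by
  unfold alternate; split_ifs <;> rfl

theorem alternate_eq_mul_one_add {ζA ζB ℓA ℓB : ℝ} (hℓA : ℓA = ζA * (1 + ℓA))
    (hℓB : ℓB = ζB * (1 + ℓB)) (j : ℕ) :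
    alternate ℓA ℓB j = alternate ζA ζB j * (1 + alternate ℓA ℓB j) := by
  unfold alternate; split_ifs <;> assumption

section Chain

variable (ℓA ℓB : ℝ)

/-- Along a path of `L` blocks with boundary values `x 0, …, x L`, closed by a block of weight
`ℓ₁` from `x L` to `y` and a block of weight `ℓ₂` from `y` back to `x 0`: the sum over the
blocks of weight times increment. -/
def chainFlux (ℓ₁ ℓ₂ : ℝ) (L : ℕ) (x : ℕ → ℝ) (y : ℝ) : ℝ :=
  ∑ j ∈ range L, alternate ℓA ℓB j * (x (j + 1) - x j) + ℓ₁ * (y - x L) + ℓ₂ * (x 0 - y)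

theorem sum_alternate_mul_sub (f : ℕ → ℝ) (m : ℕ) :
    ∑ j ∈ range (2 * m), alternate ℓA ℓB j * (f j - f (j + 1)) =
      ℓA * (f 0 - f (2 * m)) - (ℓA - ℓB) * ∑ j ∈ range (2 * m), (-1) ^ j * f j := by
  induction m with
  | zero => simp
  | succ m ih =>
    rw [show 2 * (m + 1) = 2 * m + 1 + 1 by ring, sum_range_succ, sum_range_succ, ih,
      sum_range_succ, sum_range_succ]
    simp only [alternate, if_neg (show ¬2 * m % 2 = 1 by omega),
      if_pos (show (2 * m + 1) % 2 = 1 by omega), (even_two_mul m).neg_one_pow,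
      (odd_two_mul_add_one m).neg_one_pow]
    ring

theorem path_start_eq (ℓ β x : ℕ → ℝ) (L : ℕ)
    (h : ∀ j < L, x j - ℓ j = β j * (x (j + 1) - ℓ j)) :
    x 0 = ∑ j ∈ range L, ℓ j * (∏ i ∈ range j, β i - ∏ i ∈ range (j + 1), β i) +
      (∏ i ∈ range L, β i) * x L := by
  induction L with
  | zero => simp
  | succ L ih =>
    rw [ih fun j hj => h j (Nat.lt_succ_of_lt hj), sum_range_succ, prod_range_succ]
    linear_combination (∏ i ∈ range L, β i) * h L L.lt_succ_self

theorem path_start_eq_alternate (m : ℕ) (β x : ℕ → ℝ)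
    (hx : ∀ j < 2 * m, x j - alternate ℓA ℓB j = β j * (x (j + 1) - alternate ℓA ℓB j)) :
    x 0 = ℓA * (1 - ∏ j ∈ range (2 * m), β j) -
        (ℓA - ℓB) * ∑ j ∈ range (2 * m), (-1) ^ j * ∏ i ∈ range j, β i +
      (∏ j ∈ range (2 * m), β j) * x (2 * m) := by
  have h := sum_alternate_mul_sub ℓA ℓB (fun j => ∏ i ∈ range j, β i) m
  rw [prod_range_zero] at h
  rw [path_start_eq _ β x _ hx, h]

theorem eq_prod_Ico_mul_of_forall (β d : ℕ → ℝ) (L : ℕ) (h : ∀ j < L, d j = β j * d (j + 1))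
    {j : ℕ} (hj : j ≤ L) : d j = (∏ i ∈ Ico j L, β i) * d L := by
  induction hj using Nat.decreasingInduction with
  | self => simp
  | of_succ j hj ih => rw [h j hj, ih, prod_eq_prod_Ico_succ_bot hj, mul_assoc]

theorem sum_alternate_sub_of_path (m : ℕ) (β x x' : ℕ → ℝ)
    (hx : ∀ j < 2 * m, x j - alternate ℓA ℓB j = β j * (x (j + 1) - alternate ℓA ℓB j))
    (hx' : ∀ j < 2 * m, x' j - alternate ℓA ℓB j = β j * (x' (j + 1) - alternate ℓA ℓB j)) :
    ∑ j ∈ range (2 * m), alternate ℓA ℓB j * (x' (j + 1) - x' j) -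
        ∑ j ∈ range (2 * m), alternate ℓA ℓB j * (x (j + 1) - x j) =
      ((ℓA - ℓB) * ∑ j ∈ range (2 * m), (-1) ^ j * ∏ i ∈ Ico j (2 * m), β i -
        ℓA * (∏ j ∈ range (2 * m), β j - 1)) * (x' (2 * m) - x (2 * m)) := by
  -- the two solutions differ along the path by a solution of the homogeneous recurrence
  have hd (j : ℕ) (hj : j ≤ 2 * m) :
      x' j - x j = (∏ i ∈ Ico j (2 * m), β i) * (x' (2 * m) - x (2 * m)) :=
    eq_prod_Ico_mul_of_forall β (fun j => x' j - x j) (2 * m)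
      (fun j hj => by linear_combination hx' j hj - hx j hj) hj
  have hflux : ∑ j ∈ range (2 * m), alternate ℓA ℓB j * (x' (j + 1) - x' j) -
      ∑ j ∈ range (2 * m), alternate ℓA ℓB j * (x (j + 1) - x j) =
      -∑ j ∈ range (2 * m), alternate ℓA ℓB j * (x' j - x j - (x' (j + 1) - x (j + 1))) := by
    rw [← sum_sub_distrib, ← sum_neg_distrib]
    exact sum_congr rfl fun j _ => by ring
  have hsuf : ∑ j ∈ range (2 * m), (-1) ^ j * (x' j - x j) =
      (∑ j ∈ range (2 * m), (-1) ^ j * ∏ i ∈ Ico j (2 * m), β i) * (x' (2 * m) - x (2 * m)) := by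
    rw [sum_mul]
    exact sum_congr rfl fun j hj => by rw [hd j (mem_range.mp hj).le, mul_assoc]
  rw [hflux, sum_alternate_mul_sub ℓA ℓB (fun j => x' j - x j) m, hsuf, hd 0 (Nat.zero_le _),
    ← range_eq_Ico]
  ring

/-- Swapping the two closing blocks of a cyclic chain: a path of `2m` alternating blocks
(factors `β j`) closed by a `B`-block of factor `u` and an `A`-block of factor `v`, against the
same path closed by these two blocks in the opposite order. A block of weight `ℓ` and factor `β`
from value `s` to value `t` is subject to `s - ℓ = β * (t - ℓ)`. -/
theorem swap_closing_blocks (m : ℕ) (β x x' : ℕ → ℝ) (u v y y' : ℝ)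
    (hx : ∀ j < 2 * m, x j - alternate ℓA ℓB j = β j * (x (j + 1) - alternate ℓA ℓB j))
    (hx' : ∀ j < 2 * m, x' j - alternate ℓA ℓB j = β j * (x' (j + 1) - alternate ℓA ℓB j))
    (hu : x (2 * m) - ℓB = u * (y - ℓB)) (hv : y - ℓA = v * (x 0 - ℓA))
    (hv' : x' (2 * m) - ℓA = v * (y' - ℓA)) (hu' : y' - ℓB = u * (x' 0 - ℓB))
    (hP : (∏ j ∈ range (2 * m), β j) * u * v ≠ 1) :
    chainFlux ℓA ℓB ℓA ℓB (2 * m) x' y' - chainFlux ℓA ℓB ℓB ℓA (2 * m) x y =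
      (ℓA - ℓB) ^ 2 * (1 - u) * (1 - v) / (1 - (∏ j ∈ range (2 * m), β j) * u * v) *
        ∑ j ∈ range (2 * m), (-1) ^ j * ((∏ i ∈ range j, β i) + ∏ i ∈ Ico j (2 * m), β i) := by
  set B := ∏ j ∈ range (2 * m), β j
  set pre := ∑ j ∈ range (2 * m), (-1) ^ j * ∏ i ∈ range j, β i
  set suf := ∑ j ∈ range (2 * m), (-1) ^ j * ∏ i ∈ Ico j (2 * m), β i
  have hP' : 1 - B * u * v ≠ 0 := sub_ne_zero.mpr (Ne.symm hP)
  have hx0 := path_start_eq_alternate ℓA ℓB m β x hx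
  have hx0' := path_start_eq_alternate ℓA ℓB m β x' hx'
  have hF := sum_alternate_sub_of_path ℓA ℓB m β x x' hx hx'
  have hxL : x (2 * m) * (1 - B * u * v) =
      ℓB * (1 - u) + u * ℓA * (1 - v) + u * v * (ℓA * (1 - B) - (ℓA - ℓB) * pre) := by
    linear_combination hu + u * hv + u * v * hx0
  have hxL' : x' (2 * m) * (1 - B * u * v) =
      ℓA * (1 - v) + v * ℓB * (1 - u) + u * v * (ℓA * (1 - B) - (ℓA - ℓB) * pre) := by
    linear_combination hv' + v * hu' + u * v * hx0'
  have hpre_suf : ∑ j ∈ range (2 * m), (-1) ^ j * ((∏ i ∈ range j, β i) + ∏ i ∈ Ico j (2 * m), β i)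
      = pre + suf := by
    simp only [pre, suf, mul_add, sum_add_distrib]
  have hy : y = ℓA + v * (x 0 - ℓA) := by linear_combination hv
  have hy' : y' = ℓB + u * (x' 0 - ℓB) := by linear_combination hu'
  unfold chainFlux
  rw [hpre_suf, div_mul_eq_mul_div, eq_div_iff hP', hy, hy', hx0, hx0']
  set K := ℓA * (B - 1) - (ℓA - ℓB) * suf
  linear_combination (1 - B * u * v) * hF + (K + ℓB - B * (ℓB * v + ℓA * (1 - v))) * hxL +
    (-K - ℓA + B * (ℓA * u + ℓB * (1 - u))) * hxL'

end Chain

def blockEnd (a : ℕ → ℕ) (t : ℕ) : ℕ := ∑ k ∈ Icc 1 t, a k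

theorem blockEnd_zero (a : ℕ → ℕ) : blockEnd a 0 = 0 := by simp [blockEnd]

theorem blockEnd_succ (a : ℕ → ℕ) (t : ℕ) : blockEnd a (t + 1) = blockEnd a t + a (t + 1) :=
  sum_Icc_succ_top (by omega) a

theorem blockEnd_succ_sub (a : ℕ → ℕ) (t : ℕ) : blockEnd a (t + 1) - blockEnd a t = a (t + 1) := by
  rw [blockEnd_succ, Nat.add_sub_cancel_left]

theorem blockEnd_mono (a : ℕ → ℕ) : Monotone (blockEnd a) :=
  monotone_nat_of_le_succ fun t => by rw [blockEnd_succ]; omega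

/-- Start of block `j` of the path `2m+4, 1, 2, …, 2m+1` through the blocks of `a`. -/
def pathStart (a : ℕ → ℕ) (m : ℕ) : ℕ → ℕ
  | 0 => blockEnd a (2 * m + 3)
  | j + 1 => blockEnd a j

/-- One period of `z` consists of the blocks `1, …, 2m+1` of `a` (alternately `ζA` and `ζB`),
a run of `k₁` values `ζ₁` and a run of `k₂` values `ζ₂` filling the place of the blocks
`2m+2, 2m+3`, and the `ζB`-block `2m+4`. -/
structure IsCycle (z : ℕ → ℝ) (a : ℕ → ℕ) (m k₁ k₂ : ℕ) (ζA ζB ζ₁ ζ₂ : ℝ) : Prop where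
  path : ∀ t ≤ 2 * m, ∀ i ∈ Ico (blockEnd a t) (blockEnd a (t + 1)), z i = alternate ζA ζB (t + 1)
  run₁ : ∀ i ∈ Ico (blockEnd a (2 * m + 1)) (blockEnd a (2 * m + 1) + k₁), z i = ζ₁
  run₂ : ∀ i ∈ Ico (blockEnd a (2 * m + 1) + k₁) (blockEnd a (2 * m + 3)), z i = ζ₂
  last : ∀ i ∈ Ico (blockEnd a (2 * m + 3)) (blockEnd a (2 * m + 4)), z i = ζB
  closing : blockEnd a (2 * m + 1) + k₁ + k₂ = blockEnd a (2 * m + 3)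

namespace IsCycle

variable {z W b : ℕ → ℝ} {a : ℕ → ℕ} {m k₁ k₂ : ℕ} {ζA ζB ζ₁ ζ₂ ℓA ℓB ℓ₁ ℓ₂ : ℝ}

theorem le_closing (hc : IsCycle z a m k₁ k₂ ζA ζB ζ₁ ζ₂) :
    blockEnd a (2 * m + 1) + k₁ ≤ blockEnd a (2 * m + 3) :=
  hc.closing ▸ Nat.le_add_right _ _

theorem closing_sub (hc : IsCycle z a m k₁ k₂ ζA ζB ζ₁ ζ₂) :
    blockEnd a (2 * m + 3) - (blockEnd a (2 * m + 1) + k₁) = k₂ := by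
  have := hc.closing; omega

theorem transfer (hc : IsCycle z a m k₁ k₂ ζA ζB ζ₁ ζ₂) (hW : ∀ i, W i = z i * (1 + W (i + 1)))
    (hWper : Periodic W (blockEnd a (2 * m + 4)))
    (hℓA : ℓA = ζA * (1 + ℓA)) (hℓB : ℓB = ζB * (1 + ℓB))
    (hb : ∀ t ≤ 2 * m, b (t + 1) = alternate ζA ζB (t + 1) ^ a (t + 1))
    (hb0 : b 0 = ζB ^ a (2 * m + 4)) (j : ℕ) (hj : j < 2 * m + 2) :
    W (pathStart a m j) - alternate ℓA ℓB j =
      b j * (W (pathStart a m (j + 1)) - alternate ℓA ℓB j) := by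
  rcases j with _ | t
  · have h := run_transfer hW hℓB (blockEnd_mono a (show 2 * m + 3 ≤ 2 * m + 4 by omega)) hc.last
    have hW0 : W (blockEnd a (2 * m + 4)) = W 0 := by simpa using hWper 0
    rw [hW0, show 2 * m + 4 = 2 * m + 3 + 1 from rfl, blockEnd_succ_sub, ← hb0] at h
    simpa only [pathStart, blockEnd_zero, alternate_zero] using h
  · have h := run_transfer hW (alternate_eq_mul_one_add hℓA hℓB (t + 1))
      (blockEnd_mono a t.le_succ) (hc.path t (by omega))
    rwa [blockEnd_succ_sub, ← hb t (by omega)] at h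

theorem transfer₁ (hc : IsCycle z a m k₁ k₂ ζA ζB ζ₁ ζ₂) (hW : ∀ i, W i = z i * (1 + W (i + 1)))
    (hℓ₁ : ℓ₁ = ζ₁ * (1 + ℓ₁)) :
    W (pathStart a m (2 * m + 2)) - ℓ₁ = ζ₁ ^ k₁ * (W (blockEnd a (2 * m + 1) + k₁) - ℓ₁) := by
  have h := run_transfer hW hℓ₁ (Nat.le_add_right _ _) hc.run₁
  rwa [Nat.add_sub_cancel_left] at h

theorem transfer₂ (hc : IsCycle z a m k₁ k₂ ζA ζB ζ₁ ζ₂) (hW : ∀ i, W i = z i * (1 + W (i + 1)))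
    (hℓ₂ : ℓ₂ = ζ₂ * (1 + ℓ₂)) :
    W (blockEnd a (2 * m + 1) + k₁) - ℓ₂ = ζ₂ ^ k₂ * (W (pathStart a m 0) - ℓ₂) := by
  rw [← hc.closing_sub]
  exact run_transfer hW hℓ₂ hc.le_closing hc.run₂

theorem prod_path (hc : IsCycle z a m k₁ k₂ ζA ζB ζ₁ ζ₂)
    (hb : ∀ t ≤ 2 * m, b (t + 1) = alternate ζA ζB (t + 1) ^ a (t + 1)) :
    ∏ i ∈ range (blockEnd a (2 * m + 1)), z i = ∏ t ∈ range (2 * m + 1), b (t + 1) := by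
  rw [range_eq_Ico, ← blockEnd_zero a, prod_Ico_eq_prod_blocks _ (blockEnd_mono a)]
  refine prod_congr rfl fun t ht => ?_
  have ht : t ≤ 2 * m := Nat.lt_succ_iff.mp (mem_range.mp ht)
  rw [run_prod (hc.path t ht), blockEnd_succ_sub, hb t ht]

theorem prod_eq (hc : IsCycle z a m k₁ k₂ ζA ζB ζ₁ ζ₂)
    (hb : ∀ t ≤ 2 * m, b (t + 1) = alternate ζA ζB (t + 1) ^ a (t + 1))
    (hb0 : b 0 = ζB ^ a (2 * m + 4)) :
    ∏ i ∈ range (blockEnd a (2 * m + 4)), z i =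
      (∏ j ∈ range (2 * m + 2), b j) * ζ₁ ^ k₁ * ζ₂ ^ k₂ := by
  have h₁ := Nat.le_add_right (blockEnd a (2 * m + 1)) k₁
  have h₃ : blockEnd a (2 * m + 3) ≤ blockEnd a (2 * m + 4) := blockEnd_mono a (by omega)
  rw [← prod_range_mul_prod_Ico _ (h₁.trans (hc.le_closing.trans h₃)),
    ← prod_Ico_consecutive _ h₁ (hc.le_closing.trans h₃),
    ← prod_Ico_consecutive _ hc.le_closing h₃, hc.prod_path hb,
    run_prod hc.run₁, run_prod hc.run₂, run_prod hc.last, Nat.add_sub_cancel_left, hc.closing_sub,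
    show 2 * m + 4 = 2 * m + 3 + 1 from rfl, blockEnd_succ_sub, ← hb0,
    show 2 * m + 2 = 2 * m + 1 + 1 from rfl, prod_range_succ' b (2 * m + 1)]
  ring

theorem sum_path (hc : IsCycle z a m k₁ k₂ ζA ζB ζ₁ ζ₂) (hW : ∀ i, W i = z i * (1 + W (i + 1)))
    (hℓA : ℓA = ζA * (1 + ℓA)) (hℓB : ℓB = ζB * (1 + ℓB)) :
    ∑ i ∈ range (blockEnd a (2 * m + 1)), (W i - z i) =
      ∑ t ∈ range (2 * m + 1),
        (a (t + 1) : ℝ) * (alternate ℓA ℓB (t + 1) - alternate ζA ζB (t + 1)) +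
      ∑ t ∈ range (2 * m + 1),
        alternate ℓA ℓB (t + 1) * (W (blockEnd a (t + 1)) - W (blockEnd a t)) := by
  rw [range_eq_Ico, ← blockEnd_zero a, sum_Ico_eq_sum_blocks _ (blockEnd_mono a),
    ← sum_add_distrib]
  refine sum_congr rfl fun t ht => ?_
  rw [run_sum hW (alternate_eq_mul_one_add hℓA hℓB (t + 1)) (blockEnd_mono a t.le_succ)
    (hc.path t (Nat.lt_succ_iff.mp (mem_range.mp ht))), blockEnd_succ_sub]

theorem sum_eq (hc : IsCycle z a m k₁ k₂ ζA ζB ζ₁ ζ₂) (hW : ∀ i, W i = z i * (1 + W (i + 1)))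
    (hWper : Periodic W (blockEnd a (2 * m + 4)))
    (hℓA : ℓA = ζA * (1 + ℓA)) (hℓB : ℓB = ζB * (1 + ℓB))
    (hℓ₁ : ℓ₁ = ζ₁ * (1 + ℓ₁)) (hℓ₂ : ℓ₂ = ζ₂ * (1 + ℓ₂)) :
    ∑ i ∈ range (blockEnd a (2 * m + 4)), (W i - z i) =
      ∑ t ∈ range (2 * m + 1),
          (a (t + 1) : ℝ) * (alternate ℓA ℓB (t + 1) - alternate ζA ζB (t + 1)) +
        a (2 * m + 4) * (ℓB - ζB) + k₁ * (ℓ₁ - ζ₁) + k₂ * (ℓ₂ - ζ₂) +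
      chainFlux ℓA ℓB ℓ₁ ℓ₂ (2 * m + 2) (fun j => W (pathStart a m j))
        (W (blockEnd a (2 * m + 1) + k₁)) := by
  have hW0 : W (blockEnd a (2 * m + 4)) = W 0 := by simpa using hWper 0
  unfold chainFlux
  have h₁ := Nat.le_add_right (blockEnd a (2 * m + 1)) k₁
  have h₃ : blockEnd a (2 * m + 3) ≤ blockEnd a (2 * m + 4) := blockEnd_mono a (by omega)
  rw [← sum_range_add_sum_Ico _ (h₁.trans (hc.le_closing.trans h₃)),
    ← sum_Ico_consecutive _ h₁ (hc.le_closing.trans h₃),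
    ← sum_Ico_consecutive _ hc.le_closing h₃, hc.sum_path hW hℓA hℓB,
    run_sum hW hℓ₁ h₁ hc.run₁, run_sum hW hℓ₂ hc.le_closing hc.run₂,
    run_sum hW hℓB h₃ hc.last, hW0, Nat.add_sub_cancel_left,
    hc.closing_sub, show 2 * m + 4 = 2 * m + 3 + 1 from rfl, blockEnd_succ_sub,
    show 2 * m + 2 = 2 * m + 1 + 1 from rfl, sum_range_succ' _ (2 * m + 1)]
  simp only [pathStart, blockEnd_zero, alternate_zero]
  ring

end IsCycle

theorem prod_range_add_four {b : ℕ → ℝ} {a : ℕ → ℕ} {m : ℕ} {ζA ζB : ℝ}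
    (hb : ∀ t ≤ 2 * m + 2, b (t + 1) = alternate ζA ζB (t + 1) ^ a (t + 1)) :
    ∏ j ∈ range (2 * m + 4), b j =
      (∏ j ∈ range (2 * m + 2), b j) * ζB ^ a (2 * m + 2) * ζA ^ a (2 * m + 3) := by
  rw [show 2 * m + 4 = 2 * m + 2 + 1 + 1 from rfl, prod_range_succ, prod_range_succ,
    hb (2 * m + 1) (by omega), hb (2 * m + 2) (by omega), alternate, alternate, if_neg (by omega),
    if_pos (by omega)]

/-- Swapping the blocks `2m+2` and `2m+3` of the cycle. -/
theorem sum_sub_sum_of_swap {z z' W W' b : ℕ → ℝ} {a : ℕ → ℕ} {m : ℕ} {ζA ζB ℓA ℓB : ℝ}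
    (hD : IsCycle z a m (a (2 * m + 2)) (a (2 * m + 3)) ζA ζB ζB ζA)
    (hD' : IsCycle z' a m (a (2 * m + 3)) (a (2 * m + 2)) ζA ζB ζA ζB)
    (hW : ∀ i, W i = z i * (1 + W (i + 1))) (hW' : ∀ i, W' i = z' i * (1 + W' (i + 1)))
    (hWper : Periodic W (blockEnd a (2 * m + 4))) (hWper' : Periodic W' (blockEnd a (2 * m + 4)))
    (hℓA : ℓA = ζA * (1 + ℓA)) (hℓB : ℓB = ζB * (1 + ℓB))
    (hb : ∀ t ≤ 2 * m + 2, b (t + 1) = alternate ζA ζB (t + 1) ^ a (t + 1))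
    (hb0 : b 0 = ζB ^ a (2 * m + 4)) (hP : ∏ j ∈ range (2 * m + 4), b j ≠ 1) :
    ∑ i ∈ range (blockEnd a (2 * m + 4)), (W' i - z' i) -
        ∑ i ∈ range (blockEnd a (2 * m + 4)), (W i - z i) =
      (ℓA - ℓB) ^ 2 * (1 - b (2 * m + 2)) * (1 - b (2 * m + 3)) /
          (1 - ∏ j ∈ range (2 * m + 4), b j) *
        ∑ j ∈ range (2 * m + 2),
          (-1) ^ j * ((∏ i ∈ range j, b i) + ∏ i ∈ Ico j (2 * m + 2), b i) := by
  have hbpath (t : ℕ) (ht : t ≤ 2 * m) := hb t (by omega)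
  have hu : b (2 * m + 2) = ζB ^ a (2 * m + 2) := by
    rw [hb (2 * m + 1) (by omega), alternate, if_neg (by omega)]
  have hv : b (2 * m + 3) = ζA ^ a (2 * m + 3) := by
    rw [hb (2 * m + 2) (by omega), alternate, if_pos (by omega)]
  rw [prod_range_add_four hb, ← hu, ← hv] at hP ⊢
  have hswap := swap_closing_blocks ℓA ℓB (m + 1) b (fun j => W (pathStart a m j))
    (fun j => W' (pathStart a m j)) _ _ _ _ (hD.transfer hW hWper hℓA hℓB hbpath hb0)
    (hD'.transfer hW' hWper' hℓA hℓB hbpath hb0) (hu ▸ hD.transfer₁ hW hℓB)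
    (hv ▸ hD.transfer₂ hW hℓA) (hv ▸ hD'.transfer₁ hW' hℓA) (hu ▸ hD'.transfer₂ hW' hℓB) hP
  rw [hD.sum_eq hW hWper hℓA hℓB hℓB hℓA, hD'.sum_eq hW' hWper' hℓA hℓB hℓA hℓB]
  linear_combination hswap

theorem sq_one_sub_pow_mul_pow (x y : ℝ) (r s : ℕ) :
    ((1 - x) ^ r * (1 - y) ^ s) ^ 2 = ((x - 1) ^ r * (y - 1) ^ s) ^ 2 := by
  have h (t : ℝ) (k : ℕ) : ((1 - t) ^ k) ^ 2 = ((t - 1) ^ k) ^ 2 := by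
    rw [← pow_mul, ← pow_mul, pow_mul', pow_mul' (t - 1), show (1 - t) ^ 2 = (t - 1) ^ 2 by ring]
  rw [mul_pow, mul_pow, h x, h y]

theorem abs_sub_one_pow_mul_lt_one {x y : ℝ} (hx : x ∈ Set.Ioo (0 : ℝ) 1)
    (hy : y ∈ Set.Ioo (0 : ℝ) 1) {r s : ℕ} (hrs : 0 < r + s) :
    |(x - 1) ^ r * (y - 1) ^ s| < 1 := by
  have hx' : |x - 1| < 1 := abs_lt.mpr ⟨by linarith [hx.1], by linarith [hx.2]⟩
  have hy' : |y - 1| < 1 := abs_lt.mpr ⟨by linarith [hy.1], by linarith [hy.2]⟩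
  rw [abs_mul, abs_pow, abs_pow]
  rcases Nat.eq_zero_or_pos r with hr | hr
  · rw [hr, pow_zero, one_mul]
    exact pow_lt_one₀ (abs_nonneg _) hy' (by omega)
  · exact mul_lt_one_of_nonneg_of_lt_one_left (pow_nonneg (abs_nonneg _) _)
      (pow_lt_one₀ (abs_nonneg _) hx' hr.ne') (pow_le_one₀ (abs_nonneg _) hy'.le)

theorem RD_sub_RD (p p' : ℕ → ℝ) (r s : ℕ) (pA pB : ℝ) :
    RD p r s pA pB - RD p' r s pA pB =
      2 * (pCircD p' r s (1 - pA) (1 - pB) - pCircD p r s (1 - pA) (1 - pB)) := by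
  unfold RD
  ring

theorem fixedPoint_eq {x : ℝ} (hx : x ≠ 2) :
    (x - 1) / (2 - x) = (x - 1) * (1 + (x - 1) / (2 - x)) := by
  have : 2 - x ≠ 0 := sub_ne_zero.mpr (Ne.symm hx)
  field_simp
  ring

theorem Sval_eq {pA pB : ℝ} {r s : ℕ} (hA : pA ≠ 2) (hB : pB ≠ 2)
    (hP₁ : (pA - 1) ^ r * (pB - 1) ^ s ≠ 1) (hP₂ : (pA - 1) ^ r * (pB - 1) ^ s ≠ -1) :
    Sval (1 - pA) (1 - pB) r s = ((pA - 1) / (2 - pA) - (pB - 1) / (2 - pB)) ^ 2 /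
      (1 - (pA - 1) ^ r * (pB - 1) ^ s) / (r + s : ℕ) := by
  have hA' : 2 - pA ≠ 0 := sub_ne_zero.mpr (Ne.symm hA)
  have hB' : 2 - pB ≠ 0 := sub_ne_zero.mpr (Ne.symm hB)
  have h1 : 1 - (pA - 1) ^ r * (pB - 1) ^ s ≠ 0 := sub_ne_zero.mpr (Ne.symm hP₁)
  have h2 : 1 + (pA - 1) ^ r * (pB - 1) ^ s ≠ 0 := fun h => hP₂ (by linarith)
  have hsign : (-1 : ℝ) ^ (r + s) * ((1 - pA) ^ r * (1 - pB) ^ s) =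
      (pA - 1) ^ r * (pB - 1) ^ s := by
    rw [← neg_sub 1 pA, ← neg_sub 1 pB, neg_pow (1 - pA), neg_pow (1 - pB), pow_add]
    ring
  unfold Sval
  rw [mul_assoc _ ((1 - pA) ^ r), hsign, sq_one_sub_pow_mul_pow,
    show (1 : ℝ) + (1 - pA) = 2 - pA by ring, show (1 : ℝ) + (1 - pB) = 2 - pB by ring,
    show 1 - ((pA - 1) ^ r * (pB - 1) ^ s) ^ 2 =
      (1 - (pA - 1) ^ r * (pB - 1) ^ s) * (1 + (pA - 1) ^ r * (pB - 1) ^ s) by ring]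
  rcases eq_or_ne ((r + s : ℕ) : ℝ) 0 with hn | hn
  · simp [hn]
  · field_simp
    ring

theorem RD_sub_RD_of_isCycle {p p' b : ℕ → ℝ} {a : ℕ → ℕ} {m r s : ℕ} {pA pB : ℝ}
    (hpA : pA ∈ Set.Ioo (0 : ℝ) 1) (hpB : pB ∈ Set.Ioo (0 : ℝ) 1) (hrs : 0 < r + s)
    (hn : blockEnd a (2 * m + 4) = r + s) (hp : Periodic p (r + s)) (hp' : Periodic p' (r + s))
    (hD : IsCycle (fun i => p (i + 1) - 1) a m (a (2 * m + 2)) (a (2 * m + 3))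
      (pA - 1) (pB - 1) (pB - 1) (pA - 1))
    (hD' : IsCycle (fun i => p' (i + 1) - 1) a m (a (2 * m + 3)) (a (2 * m + 2))
      (pA - 1) (pB - 1) (pA - 1) (pB - 1))
    (hb : ∀ t ≤ 2 * m + 2, b (t + 1) = alternate (pA - 1) (pB - 1) (t + 1) ^ a (t + 1))
    (hb0 : b 0 = (pB - 1) ^ a (2 * m + 4))
    (hP : ∏ j ∈ range (2 * m + 4), b j = (pA - 1) ^ r * (pB - 1) ^ s) :
    RD p r s pA pB - RD p' r s pA pB =
      2 * Sval (1 - pA) (1 - pB) r s * (1 - b (2 * m + 2)) * (1 - b (2 * m + 3)) *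
        ∑ j ∈ range (2 * m + 2),
          (-1) ^ j * ((∏ i ∈ range j, b i) + ∏ i ∈ Ico j (2 * m + 2), b i) := by
  have hPabs := abs_sub_one_pow_mul_lt_one hpA hpB hrs
  have hP₁ : (pA - 1) ^ r * (pB - 1) ^ s ≠ 1 := fun h => by simp [h] at hPabs
  have hP₂ : (pA - 1) ^ r * (pB - 1) ^ s ≠ -1 := fun h => by simp [h] at hPabs
  have hA2 : pA ≠ 2 := by linarith [hpA.2]
  have hB2 : pB ≠ 2 := by linarith [hpB.2]
  have hbpath (t : ℕ) (ht : t ≤ 2 * m) := hb t (by omega)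
  have hzP : ∏ i ∈ range (r + s), (p (i + 1) - 1) = (pA - 1) ^ r * (pB - 1) ^ s := by
    rw [← hn, hD.prod_eq hbpath hb0, ← prod_range_add_four hb, hP]
  have hzP' : ∏ i ∈ range (r + s), (p' (i + 1) - 1) = (pA - 1) ^ r * (pB - 1) ^ s := by
    rw [← hn, hD'.prod_eq hbpath hb0, mul_right_comm, ← prod_range_add_four hb, hP]
  have hz := periodic_shift_sub_one hp
  have hz' := periodic_shift_sub_one hp'
  have key := sum_sub_sum_of_swap hD hD' (tailSum_eq hz (hzP ▸ hP₁))
    (tailSum_eq hz' (hzP' ▸ hP₁)) (by rw [hn]; exact periodic_tailSum hz)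
    (by rw [hn]; exact periodic_tailSum hz') (fixedPoint_eq hA2) (fixedPoint_eq hB2) hb hb0
    (hP ▸ hP₁)
  have hQ := sq_one_sub_pow_mul_pow pA pB r s
  rw [hP, hn] at key
  rw [RD_sub_RD, pCircD_eq hp (hzP ▸ hQ) (hzP ▸ hP₁) (hzP ▸ hP₂),
    pCircD_eq hp' (hzP' ▸ hQ) (hzP' ▸ hP₁) (hzP' ▸ hP₂), Sval_eq hA2 hB2 hP₁ hP₂,
    ← sum_sub_distrib, ← sum_sub_distrib]
  linear_combination (2 / ((r + s : ℕ) : ℝ)) * key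

theorem run_of_blocks {p : ℕ → ℝ} {a : ℕ → ℕ} {T : ℕ} {x y : ℝ}
    (hblocks : ∀ t, 1 ≤ t → t ≤ T → ∀ i, blockEnd a (t - 1) < i → i ≤ blockEnd a t →
      p i = alternate x y t) {t u v : ℕ} (ht : t + 1 ≤ T)
    (hu : blockEnd a t ≤ u) (hv : v ≤ blockEnd a (t + 1)) :
    ∀ i ∈ Ico u v, p (i + 1) - 1 = alternate (x - 1) (y - 1) (t + 1) := fun i hi => by
  rw [mem_Ico] at hi
  rw [hblocks (t + 1) (by omega) ht (i + 1) (by simp only [Nat.add_sub_cancel]; omega) (by omega),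
    alternate_sub_one]

theorem isCycle_of_blocks {p : ℕ → ℝ} {a : ℕ → ℕ} {m : ℕ} {pA pB : ℝ}
    (hblocks : ∀ t, 1 ≤ t → t ≤ 2 * m + 4 → ∀ i, blockEnd a (t - 1) < i → i ≤ blockEnd a t →
      p i = alternate pA pB t) :
    IsCycle (fun i => p (i + 1) - 1) a m (a (2 * m + 2)) (a (2 * m + 3))
      (pA - 1) (pB - 1) (pB - 1) (pA - 1) := by
  have h₂ : blockEnd a (2 * m + 2) = blockEnd a (2 * m + 1) + a (2 * m + 2) := blockEnd_succ a _
  have h₃ : blockEnd a (2 * m + 3) = blockEnd a (2 * m + 2) + a (2 * m + 3) := blockEnd_succ a _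
  refine ⟨fun t ht => run_of_blocks hblocks (by omega) le_rfl le_rfl, fun i hi => ?_,
    fun i hi => ?_, fun i hi => ?_, by omega⟩
  · rw [run_of_blocks hblocks (t := 2 * m + 1) (by omega) le_rfl h₂.ge i hi, alternate,
      if_neg (by omega)]
  · rw [run_of_blocks hblocks (t := 2 * m + 2) (by omega) h₂.le le_rfl i hi, alternate,
      if_pos (by omega)]
  · rw [run_of_blocks hblocks (t := 2 * m + 3) le_rfl le_rfl le_rfl i hi, alternate,
      if_neg (by omega)]

theorem isCycle_of_blocks_of_merged {p : ℕ → ℝ} {a a' : ℕ → ℕ} {m : ℕ} {pA pB : ℝ}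
    (hblocks : ∀ t, 1 ≤ t → t ≤ 2 * m + 2 → ∀ i, blockEnd a' (t - 1) < i → i ≤ blockEnd a' t →
      p i = alternate pA pB t)
    (ha₀ : ∀ k, 1 ≤ k → k ≤ 2 * m → a' k = a k)
    (ha₁ : a' (2 * m + 1) = a (2 * m + 1) + a (2 * m + 3))
    (ha₂ : a' (2 * m + 2) = a (2 * m + 2) + a (2 * m + 4)) :
    IsCycle (fun i => p (i + 1) - 1) a m (a (2 * m + 3)) (a (2 * m + 2))
      (pA - 1) (pB - 1) (pA - 1) (pB - 1) := by
  have hc₀ (t : ℕ) (ht : t ≤ 2 * m) : blockEnd a' t = blockEnd a t :=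
    sum_congr rfl fun k hk => ha₀ k (mem_Icc.mp hk).1 ((mem_Icc.mp hk).2.trans ht)
  have hc₁ : blockEnd a' (2 * m + 1) = blockEnd a (2 * m + 1) + a (2 * m + 3) := by
    rw [blockEnd_succ, blockEnd_succ, hc₀ _ le_rfl, ha₁, add_assoc]
  have h₁ : blockEnd a (2 * m + 1) = blockEnd a (2 * m) + a (2 * m + 1) := blockEnd_succ a _
  have h₂ : blockEnd a (2 * m + 2) = blockEnd a (2 * m + 1) + a (2 * m + 2) := blockEnd_succ a _
  have h₃ : blockEnd a (2 * m + 3) = blockEnd a (2 * m + 2) + a (2 * m + 3) := blockEnd_succ a _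
  have h₄ : blockEnd a (2 * m + 4) = blockEnd a (2 * m + 3) + a (2 * m + 4) := blockEnd_succ a _
  have hc₂ : blockEnd a' (2 * m + 2) = blockEnd a (2 * m + 4) := by
    have : blockEnd a' (2 * m + 2) = blockEnd a' (2 * m + 1) + a' (2 * m + 2) := blockEnd_succ a' _
    omega
  refine ⟨fun t ht => ?_, fun i hi => ?_, fun i hi => ?_, fun i hi => ?_, by omega⟩
  · refine run_of_blocks hblocks (by omega) (hc₀ t ht).le ?_
    rcases Nat.lt_or_ge t (2 * m) with h | h
    · exact (hc₀ (t + 1) h).ge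
    · rw [show t = 2 * m by omega, hc₁]; omega
  · rw [run_of_blocks hblocks (t := 2 * m) (by omega) (by rw [hc₀ _ le_rfl]; omega) hc₁.ge i hi,
      alternate, if_pos (by omega)]
  · rw [run_of_blocks hblocks (t := 2 * m + 1) le_rfl hc₁.le
      (show blockEnd a (2 * m + 3) ≤ blockEnd a' (2 * m + 2) by omega) i hi, alternate,
      if_neg (by omega)]
  · rw [run_of_blocks hblocks (t := 2 * m + 1) le_rfl (by omega) hc₂.ge i hi, alternate,
      if_neg (by omega)]

theorem interleaved_succ {a rk sk : ℕ → ℕ} {h k : ℕ}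
    (ha : ∀ j, 1 ≤ j → j ≤ h → a (2 * j - 1) = rk j ∧ a (2 * j) = sk j) (hk : k < h) :
    a (2 * k + 1) = rk (k + 1) ∧ a (2 * k + 2) = sk (k + 1) := by
  have h := ha (k + 1) (by omega) hk
  rwa [show 2 * (k + 1) - 1 = 2 * k + 1 by omega, show 2 * (k + 1) = 2 * k + 2 by ring] at h

theorem blockEnd_two_mul {a rk sk : ℕ → ℕ} {h : ℕ}
    (ha : ∀ j, 1 ≤ j → j ≤ h → a (2 * j - 1) = rk j ∧ a (2 * j) = sk j) :
    blockEnd a (2 * h) = ∑ k ∈ Icc 1 h, rk k + ∑ k ∈ Icc 1 h, sk k := by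
  rw [blockEnd, sum_Icc_eq_sum_range_succ, sum_range_even_odd, sum_Icc_eq_sum_range_succ,
    sum_Icc_eq_sum_range_succ, ← sum_add_distrib]
  refine sum_congr rfl fun k hk => ?_
  obtain ⟨h₁, h₂⟩ := interleaved_succ ha (mem_range.mp hk)
  rw [h₁, ← h₂]

theorem eq_alternate_pow {b : ℕ → ℝ} {a : ℕ → ℕ} {h : ℕ} {x y : ℝ}
    (hb : ∀ j, 1 ≤ j → j ≤ h →
      b (2 * j - 1) = (-1) ^ a (2 * j - 1) * x ^ a (2 * j - 1) ∧
      b (2 * j) = (-1) ^ a (2 * j) * y ^ a (2 * j))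
    (t : ℕ) (ht₁ : 1 ≤ t) (ht₂ : t ≤ 2 * h) : b t = alternate (-x) (-y) t ^ a t := by
  obtain ⟨k, rfl | rfl⟩ := Nat.even_or_odd' t
  · rw [(hb k (by omega) (by omega)).2, alternate, if_neg (by omega), neg_pow y]
  · have h₁ := (hb (k + 1) (by omega) (by omega)).1
    rw [show 2 * (k + 1) - 1 = 2 * k + 1 by omega] at h₁
    rw [h₁, alternate, if_pos (by omega), neg_pow x]

theorem prod_range_eq_pow_mul_pow {b : ℕ → ℝ} {a rk sk : ℕ → ℕ} {h : ℕ} {x y : ℝ}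
    (hbper : Periodic b (2 * h)) (hb : ∀ t, 1 ≤ t → t ≤ 2 * h → b t = alternate x y t ^ a t)
    (ha : ∀ j, 1 ≤ j → j ≤ h → a (2 * j - 1) = rk j ∧ a (2 * j) = sk j) :
    ∏ j ∈ range (2 * h), b j = x ^ (∑ k ∈ Icc 1 h, rk k) * y ^ (∑ k ∈ Icc 1 h, sk k) := by
  rw [← prod_range_shift_of_periodic hbper, prod_range_even_odd, sum_Icc_eq_sum_range_succ,
    sum_Icc_eq_sum_range_succ, ← prod_pow_eq_pow_sum, ← prod_pow_eq_pow_sum, ← prod_mul_distrib]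
  refine prod_congr rfl fun k hk => ?_
  have hk : k < h := mem_range.mp hk
  obtain ⟨h₁, h₂⟩ := interleaved_succ ha hk
  rw [hb _ (by omega) (by omega), hb _ (by omega) (by omega), h₁, ← h₂, alternate, alternate,
    if_pos (by omega), if_neg (by omega)]

theorem merged_blocks {a a' rk sk : ℕ → ℕ} {m : ℕ}
    (ha : ∀ j, 1 ≤ j → j ≤ m + 2 → a (2 * j - 1) = rk j ∧ a (2 * j) = sk j)
    (hr : a' (2 * (m + 2) - 3) = rk (m + 2 - 1) + rk (m + 2))
    (hs : a' (2 * (m + 2) - 2) = sk (m + 2 - 1) + sk (m + 2)) :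
    a' (2 * m + 1) = a (2 * m + 1) + a (2 * m + 3) ∧
      a' (2 * m + 2) = a (2 * m + 2) + a (2 * m + 4) := by
  obtain ⟨hr₁, hs₁⟩ := interleaved_succ ha (show m < m + 2 by omega)
  obtain ⟨hr₂, hs₂⟩ := interleaved_succ ha (show m + 1 < m + 2 by omega)
  rw [show 2 * (m + 2) - 3 = 2 * m + 1 by omega, show m + 2 - 1 = m + 1 by omega] at hr
  rw [show 2 * (m + 2) - 2 = 2 * m + 2 by omega, show m + 2 - 1 = m + 1 by omega] at hs
  exact ⟨by rw [hr, hr₁]; exact congrArg _ hr₂.symm, by rw [hs, hs₁]; exact congrArg _ hs₂.symm⟩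

end Lemma5

open Lemma5 in
theorem lemma5_RD_difference_general
    (pA pB qA qB : ℝ) (hpA : pA ∈ Set.Ioo (0 : ℝ) 1) (hpB : pB ∈ Set.Ioo (0 : ℝ) 1)
    (hqA : qA = 1 - pA) (hqB : qB = 1 - pB)
    (h r s : ℕ) (hh : 2 ≤ h)
    (rk sk : ℕ → ℕ)
    (hrk : ∀ k, 1 ≤ k → k ≤ h → 1 ≤ rk k)
    (hrsum : ∑ k ∈ Finset.Icc 1 h, rk k = r) (hssum : ∑ k ∈ Finset.Icc 1 h, sk k = s)
    -- block vector of D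
    (a : ℕ → ℕ)
    (ha : ∀ j, 1 ≤ j → j ≤ h → a (2 * j - 1) = rk j ∧ a (2 * j) = sk j)
    -- the strategy D
    (p : ℕ → ℝ)
    (hper : ∀ i, p (i + (r + s)) = p i)
    (hblocks : ∀ t, 1 ≤ t → t ≤ 2 * h → ∀ i,
        (∑ k ∈ Finset.Icc 1 (t - 1), a k) < i → i ≤ ∑ k ∈ Finset.Icc 1 t, a k →
        p i = if t % 2 = 1 then pA else pB)
    -- block vector of D'
    (a' : ℕ → ℕ)
    (ha'₁ : ∀ k, 1 ≤ k → k ≤ 2 * h - 4 → a' k = a k)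
    (ha'₂ : a' (2 * h - 3) = rk (h - 1) + rk h)
    (ha'₃ : a' (2 * h - 2) = sk (h - 1) + sk h)
    -- the strategy D'
    (p' : ℕ → ℝ)
    (hper' : ∀ i, p' (i + (r + s)) = p' i)
    (hblocks' : ∀ t, 1 ≤ t → t ≤ 2 * h - 2 → ∀ i,
        (∑ k ∈ Finset.Icc 1 (t - 1), a' k) < i → i ≤ ∑ k ∈ Finset.Icc 1 t, a' k →
        p' i = if t % 2 = 1 then pA else pB)
    -- the numbers b_i, built from D
    (b : ℕ → ℝ)
    (hbper : ∀ i, b (i + 2 * h) = b i)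
    (hb : ∀ j, 1 ≤ j → j ≤ h →
        b (2 * j - 1) = (-1 : ℝ) ^ a (2 * j - 1) * qA ^ a (2 * j - 1) ∧
        b (2 * j) = (-1 : ℝ) ^ a (2 * j) * qB ^ a (2 * j)) :
    RD p r s pA pB - RD p' r s pA pB
      = 2 * Sval qA qB r s * (1 - b (2 * h - 2)) * (1 - b (2 * h - 1)) *
          ∑ j ∈ Finset.range (2 * h - 2),
            (-1 : ℝ) ^ j *
              ((∏ i ∈ Finset.range j, b i) + ∏ i ∈ Finset.Icc j (2 * h - 3), b i) := by
  obtain ⟨m, rfl⟩ : ∃ m, h = m + 2 := ⟨h - 2, by omega⟩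
  subst hqA hqB
  have hbpow (t : ℕ) (h₁ : 1 ≤ t) (h₂ : t ≤ 2 * (m + 2)) :
      b t = alternate (pA - 1) (pB - 1) t ^ a t := by
    simpa only [neg_sub] using eq_alternate_pow hb t h₁ h₂
  have hr : 0 < r := by
    rw [← hrsum]
    exact lt_of_lt_of_le (hrk 1 le_rfl (by omega))
      (single_le_sum (fun _ _ => Nat.zero_le _) (mem_Icc.mpr ⟨le_rfl, by omega⟩))
  obtain ⟨ha'r, ha's⟩ := merged_blocks ha ha'₂ ha'₃
  have key := RD_sub_RD_of_isCycle hpA hpB (by omega)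
    (by rw [show 2 * m + 4 = 2 * (m + 2) by ring, blockEnd_two_mul ha, hrsum, hssum]) hper hper'
    (isCycle_of_blocks hblocks)
    (isCycle_of_blocks_of_merged (fun t h₁ h₂ => hblocks' t h₁ (by omega))
      (fun k h₁ h₂ => ha'₁ k h₁ (by omega)) ha'r ha's)
    (fun t ht => hbpow (t + 1) (by omega) (by omega))
    (by rw [← hbper 0, zero_add, hbpow _ (by omega) le_rfl, alternate, if_neg (by omega)]; rfl)
    (by rw [show 2 * m + 4 = 2 * (m + 2) by ring, prod_range_eq_pow_mul_pow hbper hbpow ha, hrsum,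
      hssum])
  rw [show 2 * (m + 2) - 2 = 2 * m + 2 by omega, show 2 * (m + 2) - 1 = 2 * m + 3 by omega,
    show 2 * (m + 2) - 3 = 2 * m + 1 by omega]
  simp_rw [← Ico_add_one_right_eq_Icc]
  exact key

/-- Lemma 5: difference of the casino's asymptotic profits per coup between
`D = A^{r_1}B^{s_1}⋯A^{r_{h−1}}B^{s_{h−1}}A^{r_h}B^{s_h}` and
`D' = A^{r_1}B^{s_1}⋯A^{r_{h−1}}A^{r_h}B^{s_{h−1}}B^{s_h}`.

The strategies are encoded by their block vectors: for `D`,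
`a = (a_1,…,a_{2h}) = (r_1,s_1,…,r_h,s_h)`, and the sequence `p` equals `p_A` on
(odd-indexed) `A`-blocks and `p_B` on (even-indexed) `B`-blocks, extended with
period `r+s`; likewise for `D'` with block vector
`a' = (r_1,s_1,…,r_{h-2},s_{h-2}, r_{h-1}+r_h, s_{h-1}+s_h)`.
The numbers `b_i` are built from `D`: `b_{2j-1} = (−1)^{a_{2j-1}} q_A^{a_{2j-1}}`,
`b_{2j} = (−1)^{a_{2j}} q_B^{a_{2j}}`, extended with period `2h` (so `b_0 = b_{2h}`). -/
theorem lemma5_RD_difference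
    (pA pB qA qB : ℝ) (hpA : pA ∈ Set.Ioo (0 : ℝ) 1) (hpB : pB ∈ Set.Ioo (0 : ℝ) 1)
    (hqA : qA = 1 - pA) (hqB : qB = 1 - pB)
    (h r s : ℕ) (hh : 2 ≤ h)
    (rk sk : ℕ → ℕ)
    (hrk : ∀ k, 1 ≤ k → k ≤ h → 1 ≤ rk k) (hsk : ∀ k, 1 ≤ k → k ≤ h → 1 ≤ sk k)
    (hrsum : ∑ k ∈ Finset.Icc 1 h, rk k = r) (hssum : ∑ k ∈ Finset.Icc 1 h, sk k = s)
    -- block vector of D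
    (a : ℕ → ℕ)
    (ha : ∀ j, 1 ≤ j → j ≤ h → a (2 * j - 1) = rk j ∧ a (2 * j) = sk j)
    -- the strategy D
    (p : ℕ → ℝ)
    (hper : ∀ i, p (i + (r + s)) = p i)
    (hblocks : ∀ t, 1 ≤ t → t ≤ 2 * h → ∀ i,
        (∑ k ∈ Finset.Icc 1 (t - 1), a k) < i → i ≤ ∑ k ∈ Finset.Icc 1 t, a k →
        p i = if t % 2 = 1 then pA else pB)
    -- block vector of D'
    (a' : ℕ → ℕ)
    (ha'₁ : ∀ k, 1 ≤ k → k ≤ 2 * h - 4 → a' k = a k)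
    (ha'₂ : a' (2 * h - 3) = rk (h - 1) + rk h)
    (ha'₃ : a' (2 * h - 2) = sk (h - 1) + sk h)
    -- the strategy D'
    (p' : ℕ → ℝ)
    (hper' : ∀ i, p' (i + (r + s)) = p' i)
    (hblocks' : ∀ t, 1 ≤ t → t ≤ 2 * h - 2 → ∀ i,
        (∑ k ∈ Finset.Icc 1 (t - 1), a' k) < i → i ≤ ∑ k ∈ Finset.Icc 1 t, a' k →
        p' i = if t % 2 = 1 then pA else pB)
    -- the numbers b_i, built from D
    (b : ℕ → ℝ)
    (hbper : ∀ i, b (i + 2 * h) = b i)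
    (hb : ∀ j, 1 ≤ j → j ≤ h →
        b (2 * j - 1) = (-1 : ℝ) ^ a (2 * j - 1) * qA ^ a (2 * j - 1) ∧
        b (2 * j) = (-1 : ℝ) ^ a (2 * j) * qB ^ a (2 * j)) :
    RD p r s pA pB - RD p' r s pA pB
      = 2 * Sval qA qB r s * (1 - b (2 * h - 2)) * (1 - b (2 * h - 1)) *
          ∑ j ∈ Finset.range (2 * h - 2),
            (-1 : ℝ) ^ j *
              ((∏ i ∈ Finset.range j, b i) + ∏ i ∈ Finset.Icc j (2 * h - 3), b i) :=
  lemma5_RD_difference_general pA pB qA qB hpA hpB hqA hqB h r s hh rk sk hrk hrsum hssum a ha p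
    hper hblocks a' ha'₁ ha'₂ ha'₃ p' hper' hblocks' b hbper hb
end

section
/- For any h ≥ 1 and any real numbers b_1, …, b_{2h} extended periodically with period 2h, one has h + Σ_{m=1}^{2h} Σ_{j=1}^{2h−1} (−1)^j Π_{i=m}^{m+j−1} b_i + h Π_{i=1}^{2h} b_i = Σ_{l=1}^{h} Σ_{j=0}^{2h−1} (−1)^j Π_{k=2l+1}^{2l+j} b_k + Σ_{l=1}^{h} Σ_{j=0}^{2h−1} (−1)^{j+1} Π_{k=2l}^{2l+j} b_k. -/
/-!
Let `A m = ∑_{j < 2h} (-1)^j b_m ⋯ b_{m+j-1}` be the alternating sum of the products of `b` over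
the windows starting at `m`. Each inner sum of the identity is `A` up to a constant: the left one
is `A m - 1`, the first right one is `A (2l+1)`, and the second right one is `A (2l) + P - 1`,
where `P = b_1 ⋯ b_{2h}` is the product over the window of length `2h`, which carries the sign
`(-1)^{2h} = 1` and, by periodicity, does not depend on where it starts. Since `A` is itself
`2h`-periodic, summing it over `m = 1, …, 2h` is the same as summing it over the pairs
`(2l, 2l+1)`, `l = 1, …, h`, and the remaining constants `h - 2h + hP` and `hP - h` agree.
-/

open Finset

section Periodic

variable {M : Type*} [CommMonoid M] {f : ℕ → M} {p : ℕ}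

@[to_additive]
theorem Function.Periodic.prod_range_comp_add_s10 (hf : Function.Periodic f p) (a : ℕ) :
    ∏ i ∈ range p, f (a + i) = ∏ i ∈ range p, f i := by
  suffices shift : ∀ a, ∏ i ∈ range p, f (a + 1 + i) = ∏ i ∈ range p, f (a + i) by
    induction a with
    | zero => simp
    | succ a ih => rw [shift, ih]
  intro a
  rcases p with _ | q
  · simp
  · rw [prod_range_succ, prod_range_succ', add_zero, ← hf a]
    simp only [add_assoc, add_comm 1]

theorem Function.Periodic.prod_Ico_add_self (hf : Function.Periodic f p) (a : ℕ) :
    ∏ i ∈ Ico a (a + p), f i = ∏ i ∈ range p, f i := by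
  rw [prod_Ico_eq_prod_range, add_tsub_cancel_left, hf.prod_range_comp_add_s10]

end Periodic

section Pairing

variable {M : Type*} [AddCommMonoid M]

theorem Finset.sum_range_two_mul (f : ℕ → M) (n : ℕ) :
    ∑ i ∈ range (2 * n), f i = ∑ i ∈ range n, (f (2 * i) + f (2 * i + 1)) := by
  induction n with
  | zero => simp
  | succ n ih => rw [mul_add_one, sum_range_succ, sum_range_succ, sum_range_succ, ih, add_assoc]

theorem Function.Periodic.sum_Icc_one_two_mul {f : ℕ → M} {n : ℕ} (hf : Function.Periodic f (2 * n)) :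
    ∑ m ∈ Icc 1 (2 * n), f m = ∑ l ∈ Icc 1 n, (f (2 * l) + f (2 * l + 1)) := by
  rw [← Ico_add_one_right_eq_Icc, ← Ico_add_one_right_eq_Icc, sum_Ico_eq_sum_range,
    sum_Ico_eq_sum_range, add_tsub_cancel_right, add_tsub_cancel_right,
    hf.sum_range_comp_add, ← hf.sum_range_comp_add 2, sum_range_two_mul]
  refine sum_congr rfl fun l _ => ?_
  ring_nf

end Pairing

theorem Nat.Icc_sub_one_right_eq_Ico (a : ℕ) {n : ℕ} (hn : 0 < n) : Icc a (n - 1) = Ico a n :=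
  Icc_sub_one_right_eq_Ico_of_not_isMin (by simpa using hn.ne') a

section AlternatingWindowSum

variable {R : Type*} [CommRing R]

def alternatingWindowSum (b : ℕ → R) (m n : ℕ) : R :=
  ∑ j ∈ range n, (-1) ^ j * ∏ i ∈ Ico m (m + j), b i

theorem alternatingWindowSum_periodic {b : ℕ → R} {p : ℕ} (hb : Function.Periodic b p) (n : ℕ) :
    Function.Periodic (alternatingWindowSum b · n) p := by
  intro m
  refine sum_congr rfl fun j _ => ?_
  rw [add_right_comm, ← prod_Ico_add']
  exact congrArg _ (prod_congr rfl fun x _ => hb x)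

theorem alternatingWindowSum_succ_of_periodic {b : ℕ → R} {p : ℕ} (hb : Function.Periodic b p)
    (hp : Even p) (m : ℕ) :
    alternatingWindowSum b m (p + 1) = alternatingWindowSum b m p + ∏ i ∈ range p, b i := by
  rw [alternatingWindowSum, sum_range_succ, hp.neg_one_pow, one_mul, hb.prod_Ico_add_self]
  rfl

theorem alternatingWindowSum_eq_one_add_sum_Icc_one (b : ℕ → R) (m : ℕ) {n : ℕ} (hn : 0 < n) :
    alternatingWindowSum b m n
      = 1 + ∑ j ∈ Icc 1 (n - 1), (-1) ^ j * ∏ i ∈ Icc m (m + j - 1), b i := by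
  rw [alternatingWindowSum, sum_range_eq_add_Ico _ hn, pow_zero, add_zero, Ico_self, prod_empty,
    mul_one, Nat.Icc_sub_one_right_eq_Ico _ hn]
  congr 1
  refine sum_congr rfl fun j hj => ?_
  rw [Nat.Icc_sub_one_right_eq_Ico _ (by grind)]

theorem alternatingWindowSum_add_one_eq_sum_Icc (b : ℕ → R) (a : ℕ) {n : ℕ} (hn : 0 < n) :
    alternatingWindowSum b (a + 1) n
      = ∑ j ∈ Icc 0 (n - 1), (-1) ^ j * ∏ i ∈ Icc (a + 1) (a + j), b i := by
  rw [alternatingWindowSum, Nat.Icc_sub_one_right_eq_Ico _ hn, ← range_eq_Ico]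
  refine sum_congr rfl fun j _ => ?_
  rw [add_right_comm, Ico_add_one_right_eq_Icc]

theorem alternatingWindowSum_succ_eq_one_add_sum_Icc (b : ℕ → R) (a : ℕ) {n : ℕ} (hn : 0 < n) :
    alternatingWindowSum b a (n + 1)
      = 1 + ∑ j ∈ Icc 0 (n - 1), (-1) ^ (j + 1) * ∏ i ∈ Icc a (a + j), b i := by
  rw [alternatingWindowSum, sum_range_succ', Nat.Icc_sub_one_right_eq_Ico _ hn, ← range_eq_Ico,
    add_comm]
  simp only [pow_zero, add_zero, Ico_self, prod_empty, mul_one, ← add_assoc,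
    Ico_add_one_right_eq_Icc]

end AlternatingWindowSum

/-- For any `h ≥ 1` and real numbers `b_1, …, b_{2h}` extended periodically with
period `2h`, one has
`h + Σ_{m=1}^{2h} Σ_{j=1}^{2h−1} (−1)^j Π_{i=m}^{m+j−1} b_i + h Π_{i=1}^{2h} b_i
  = Σ_{l=1}^{h} Σ_{j=0}^{2h−1} (−1)^j Π_{k=2l+1}^{2l+j} b_k
    + Σ_{l=1}^{h} Σ_{j=0}^{2h−1} (−1)^{j+1} Π_{k=2l}^{2l+j} b_k`. -/
theorem Q_rewriting_identity
    (h : ℕ) (hh : 1 ≤ h) (b : ℕ → ℝ) (hbper : ∀ i, b (i + 2 * h) = b i) :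
    (h : ℝ)
        + (∑ m ∈ Finset.Icc 1 (2 * h), ∑ j ∈ Finset.Icc 1 (2 * h - 1),
            (-1 : ℝ) ^ j * ∏ i ∈ Finset.Icc m (m + j - 1), b i)
        + (h : ℝ) * ∏ i ∈ Finset.Icc 1 (2 * h), b i
      = (∑ l ∈ Finset.Icc 1 h, ∑ j ∈ Finset.Icc 0 (2 * h - 1),
            (-1 : ℝ) ^ j * ∏ k ∈ Finset.Icc (2 * l + 1) (2 * l + j), b k)
        + ∑ l ∈ Finset.Icc 1 h, ∑ j ∈ Finset.Icc 0 (2 * h - 1),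
            (-1 : ℝ) ^ (j + 1) * ∏ k ∈ Finset.Icc (2 * l) (2 * l + j), b k := by
  have hb : Function.Periodic b (2 * h) := hbper
  have hpos : 0 < 2 * h := by omega
  have lhs_inner (m : ℕ) :
      ∑ j ∈ Icc 1 (2 * h - 1), (-1 : ℝ) ^ j * ∏ i ∈ Icc m (m + j - 1), b i
        = alternatingWindowSum b m (2 * h) - 1 := by
    rw [alternatingWindowSum_eq_one_add_sum_Icc_one b m hpos]
    ring
  have rhs_odd (l : ℕ) :
      ∑ j ∈ Icc 0 (2 * h - 1), (-1 : ℝ) ^ j * ∏ k ∈ Icc (2 * l + 1) (2 * l + j), b k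
        = alternatingWindowSum b (2 * l + 1) (2 * h) :=
    (alternatingWindowSum_add_one_eq_sum_Icc b (2 * l) hpos).symm
  have rhs_even (l : ℕ) :
      ∑ j ∈ Icc 0 (2 * h - 1), (-1 : ℝ) ^ (j + 1) * ∏ k ∈ Icc (2 * l) (2 * l + j), b k
        = alternatingWindowSum b (2 * l) (2 * h) + ∏ i ∈ range (2 * h), b i - 1 := by
    rw [← alternatingWindowSum_succ_of_periodic hb (even_two_mul h),
      alternatingWindowSum_succ_eq_one_add_sum_Icc b _ hpos]
    ring
  have full_window : ∏ i ∈ Icc 1 (2 * h), b i = ∏ i ∈ range (2 * h), b i := by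
    rw [← Ico_add_one_right_eq_Icc, add_comm, hb.prod_Ico_add_self]
  rw [sum_congr rfl fun m _ => lhs_inner m, sum_congr rfl fun l _ => rhs_odd l,
    sum_congr rfl fun l _ => rhs_even l, full_window, sum_sub_distrib,
    Function.Periodic.sum_Icc_one_two_mul (alternatingWindowSum_periodic hb _)]
  simp only [sum_sub_distrib, sum_add_distrib, sum_const, Nat.card_Icc, nsmul_eq_mul]
  push_cast
  ring
end
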